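/- arXiv:1812.09981 — 4 statements merged into one kernel-verified Lean document; each statement's English description precedes it below -/
import Mathlib

section
/- Let A be a Bernstein algebra over a field K of characteristic ≠ 2, 3, with weight function ω and barideal N = ker(ω). The following are equivalent: (i) A satisfies the ascending chain condition on subalgebras; (ii) A satisfies the ascending chain condition on subalgebras contained in N; (iii) A is finite-dimensional over K. -/
/-!
Squaring an element of weight one gives an idempotent `e`, and the barideal `N` splits into the
Peirce spaces `U = {x ∈ N | e x = x / 2}` and `Z = {x ∈ N | e x = 0}`, with `UU ⊆ Z`, `UZ ⊆ U` and
`ZZ ⊆ U`. Linearising the Bernstein identity at `e + t n` gives enough identities to see that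
`W + D ⊆ N` is a subalgebra for every subspace `W` in the following two situations:
* `W ≤ Z`, and `D` is the annihilator of `U` in `U` (so `D ∩ Z = 0`);
* `W ≤ U`, `Z` is finite-dimensional, and `D = UU + Z(U₁ + U₂ + Z)`, where `U₁, U₂ ≤ U` are
  finite-dimensional with `U₁U₂ = UU` (so `D` is finite-dimensional).
If `Z`, resp. `U`, were infinite-dimensional, adjoining to `W` one vector at a time would produce a
strictly increasing chain of such subalgebras. So the a.c.c. on subalgebras of `N` forces `Z`, then
`U`, and hence `A = K e ⊕ U ⊕ Z`, to be finite-dimensional.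
-/

namespace Submodule

theorem exists_strictMono_sup_of_not_fg {R M : Type*} [Ring R] [AddCommGroup M] [Module R M]
    {X D : Submodule R M} (hX : ¬ X.FG) (hXD : (X ⊓ D).FG) :
    ∃ W : ℕ → Submodule R M, (∀ n, W n ≤ X) ∧ StrictMono fun n => W n ⊔ D := by
  let S := {V : Submodule R M // ∃ W : Submodule R M, W.FG ∧ W ≤ X ∧ W ⊔ D = V}
  have : Nonempty S := ⟨⟨⊥ ⊔ D, ⊥, fg_bot, bot_le, rfl⟩⟩
  have : NoMaxOrder S := by
    refine ⟨fun ⟨V, W, hW, hWX, hV⟩ => ?_⟩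
    subst hV
    obtain ⟨x, hxX, hxV⟩ : ∃ x ∈ X, x ∉ W ⊔ D := by
      refine SetLike.not_le_iff_exists.mp fun hle => hX ?_
      have hXeq : X = W ⊔ X ⊓ D := by
        rw [inf_comm, ← sup_inf_assoc_of_le D hWX, inf_eq_right.mpr hle]
      exact hXeq ▸ hW.sup hXD
    refine ⟨⟨W ⊔ R ∙ x ⊔ D, W ⊔ R ∙ x, hW.sup (fg_span_singleton x),
      sup_le hWX ((span_singleton_le_iff_mem x X).mpr hxX), rfl⟩, ?_⟩
    exact Subtype.mk_lt_mk.mpr <| SetLike.lt_iff_le_and_exists.mpr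
      ⟨sup_le_sup_right le_sup_left D, x, mem_sup_left (mem_sup_right (mem_span_singleton_self x)),
        hxV⟩
  obtain ⟨f, hf⟩ := Nat.exists_strictMono S
  choose W _ hWX hW using fun n => (f n).2
  refine ⟨W, hWX, fun i j hij => ?_⟩
  simp only [hW]
  exact hf hij

theorem exists_fg_map₂_eq {K M N P : Type*} [Field K] [AddCommGroup M] [AddCommGroup N]
    [AddCommGroup P] [Module K M] [Module K N] [Module K P] (f : M →ₗ[K] N →ₗ[K] P)
    {p : Submodule K M} {q : Submodule K N} (h : (map₂ f p q).FG) :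
    ∃ p₀ ≤ p, ∃ q₀ ≤ q, p₀.FG ∧ q₀.FG ∧ map₂ f p₀ q₀ = map₂ f p q := by
  classical
  rw [map₂_eq_span_image2] at h ⊢
  have : Module.Finite K (span K (Set.image2 (fun m n => f m n) p q)) :=
    Module.Finite.iff_fg.mpr h
  obtain ⟨t, hts, -, hspan, -⟩ :=
    exists_finset_span_eq_linearIndepOn K (Set.image2 (fun m n => f m n) (p : Set M) q)
  obtain ⟨s₁, s₂, hs₁, hs₂, hst⟩ := Finset.subset_set_image₂ hts
  refine ⟨span K s₁, span_le.mpr hs₁, span K s₂, span_le.mpr hs₂, fg_span s₁.finite_toSet,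
    fg_span s₂.finite_toSet, le_antisymm ?_ ?_⟩
  · rw [← map₂_eq_span_image2]
    exact map₂_le_map₂ (span_le.mpr hs₁) (span_le.mpr hs₂)
  · rw [← hspan, map₂_span_span]
    exact span_mono ((Finset.coe_subset.mpr hst).trans (Finset.coe_image₂ _ s₁ s₂).subset)

theorem mul_mem_sup {R A : Type*} [Semiring R] [NonUnitalNonAssocCommRing A] [Module R A]
    {W D : Submodule R A}
    (hWW : ∀ a ∈ W, ∀ b ∈ W, a * b ∈ W ⊔ D) (hWD : ∀ a ∈ W, ∀ d ∈ D, a * d ∈ W ⊔ D)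
    (hDD : ∀ d ∈ D, ∀ d' ∈ D, d * d' ∈ W ⊔ D) {x y : A} (hx : x ∈ W ⊔ D) (hy : y ∈ W ⊔ D) :
    x * y ∈ W ⊔ D := by
  obtain ⟨a, ha, d, hd, rfl⟩ := mem_sup.mp hx
  obtain ⟨b, hb, d', hd', rfl⟩ := mem_sup.mp hy
  rw [add_mul, mul_add, mul_add, mul_comm d b]
  exact add_mem (add_mem (hWW a ha b hb) (hWD a ha d' hd'))
    (add_mem (hWD b hb d hd) (hDD d hd d' hd'))

theorem fg_of_acc_subalgebras {R A : Type*} [CommRing R] [NonUnitalNonAssocRing A]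
    [Module R A] {ω : A →ₗ[R] R}
    (hacc : ∀ f : ℕ → NonUnitalSubalgebra R A, (∀ k, ∀ x ∈ f k, ω x = 0) → Monotone f →
      ∃ n, ∀ m, n ≤ m → f m = f n)
    {X D : Submodule R A} (hXD : (X ⊓ D).FG) (hker : X ⊔ D ≤ LinearMap.ker ω)
    (hmul : ∀ W ≤ X, ∀ x ∈ W ⊔ D, ∀ y ∈ W ⊔ D, x * y ∈ W ⊔ D) : X.FG := by
  by_contra hX
  obtain ⟨W, hWX, hW⟩ := exists_strictMono_sup_of_not_fg hX hXD
  let f (n : ℕ) : NonUnitalSubalgebra R A :=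
    (W n ⊔ D).toNonUnitalSubalgebra fun x y hx hy => hmul (W n) (hWX n) x hx y hy
  have hf : StrictMono f := fun i j hij => hW hij
  obtain ⟨n, hn⟩ := hacc f (fun k x hx => hker (sup_le_sup_right (hWX k) D hx)) hf.monotone
  exact (hf n.lt_succ_self).ne' (hn _ n.le_succ)

end Submodule

theorem NonUnitalSubalgebra.exists_eq_of_monotone {R A : Type*} [CommSemiring R]
    [NonUnitalNonAssocSemiring A] [Module R A] [IsNoetherian R A]
    (f : ℕ → NonUnitalSubalgebra R A) (hf : Monotone f) : ∃ n, ∀ m, n ≤ m → f m = f n := by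
  obtain ⟨n, hn⟩ := monotone_stabilizes_iff_noetherian.mpr ‹_›
    ⟨fun n => (f n).toSubmodule, fun _ _ h => hf h⟩
  exact ⟨n, fun m hm => toSubmodule_injective (hn m hm).symm⟩

theorem eq_zero_of_forall_cubic_eq_zero {K V : Type*} [Field K] [AddCommGroup V] [Module K V]
    (h2 : (2 : K) ≠ 0) (h3 : (3 : K) ≠ 0) {a b c : V}
    (h : ∀ t : K, t • a + t ^ 2 • b + t ^ 3 • c = 0) : a = 0 ∧ b = 0 ∧ c = 0 := by
  have h₁ := h 1
  have hneg := h (-1)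
  have h₂ := h 2
  have hb : (2 : K) • b = 0 := by linear_combination (norm := module) h₁ + hneg
  have hc : ((2 : K) * 3) • c = 0 := by
    linear_combination (norm := module) h₂ - (3 : K) • h₁ - hneg
  have hb0 : b = 0 := (smul_eq_zero.mp hb).resolve_left h2
  have hc0 : c = 0 := (smul_eq_zero.mp hc).resolve_left (mul_ne_zero h2 h3)
  refine ⟨?_, hb0, hc0⟩
  simpa [hb0, hc0] using h₁

namespace Bernstein

local infixl:70 " ⊛ " => Submodule.map₂ (LinearMap.mul _ _)

variable {K A : Type*} [Field K] [NonUnitalNonAssocCommRing A] [Module K A] {ω : A →ₗ[K] K}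

theorem exists_isIdempotentElem (hωmul : ∀ x y : A, ω (x * y) = ω x * ω y) (hω0 : ω ≠ 0)
    (hbern : ∀ x : A, (x * x) * (x * x) = ω x ^ 2 • (x * x)) :
    ∃ e : A, IsIdempotentElem e ∧ ω e = 1 := by
  obtain ⟨a, ha⟩ : ∃ a, ω a ≠ 0 := by simpa [DFunLike.ne_iff] using hω0
  set x := (ω a)⁻¹ • a
  have hx : ω x = 1 := by simp [x, inv_mul_cancel₀ ha]
  refine ⟨x * x, ?_, by rw [hωmul, hx, one_mul]⟩
  simpa [IsIdempotentElem, hx] using hbern x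

variable [SMulCommClass K A A] [IsScalarTower K A A] {e : A}

/-- The Bernstein identity for `e + t • n`, sorted by powers of `t`. -/
theorem bernstein_expand (hbern : ∀ x : A, (x * x) * (x * x) = ω x ^ 2 • (x * x))
    (he : IsIdempotentElem e) (he1 : ω e = 1) {n : A} (hn : ω n = 0) (t : K) :
    t • ((4 : K) • (e * (e * n)) - (2 : K) • (e * n))
      + t ^ 2 • ((4 : K) • ((e * n) * (e * n)) + (2 : K) • (e * (n * n)) - n * n)
      + t ^ 3 • ((4 : K) • ((e * n) * (n * n))) = 0 := by
  have hnn : (n * n) * (n * n) = 0 := by simp [hbern n, hn]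
  have hb := hbern (e + t • n)
  have hsq : (e + t • n) * (e + t • n) = e + (2 * t) • (e * n) + t ^ 2 • (n * n) := by
    simp only [mul_add, add_mul, smul_mul_assoc, mul_smul_comm, he.eq, mul_comm n e]
    module
  simp only [map_add, map_smul, he1, hn, smul_eq_mul, mul_zero, add_zero, one_pow, one_smul,
    hsq] at hb
  simp only [mul_add, add_mul, smul_mul_assoc, mul_smul_comm, he.eq, hnn,
    mul_comm (e * n) e, mul_comm (n * n) e, mul_comm (n * n) (e * n)] at hb
  linear_combination (norm := module) hb

theorem peirce_identities (h2 : (2 : K) ≠ 0) (h3 : (3 : K) ≠ 0)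
    (hbern : ∀ x : A, (x * x) * (x * x) = ω x ^ 2 • (x * x))
    (he : IsIdempotentElem e) (he1 : ω e = 1) {n : A} (hn : ω n = 0) :
    (2 : K) • (e * (e * n)) = e * n ∧
      (4 : K) • ((e * n) * (e * n)) + (2 : K) • (e * (n * n)) = n * n ∧
      (e * n) * (n * n) = 0 := by
  obtain ⟨h₁, h₂, h₃⟩ := eq_zero_of_forall_cubic_eq_zero h2 h3 (bernstein_expand hbern he he1 hn)
  have h4 : (4 : K) ≠ 0 := by simpa [show (4 : K) = 2 * 2 by norm_num] using h2
  refine ⟨smul_right_injective A h2 ?_, sub_eq_zero.mp h₂,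
    (smul_eq_zero.mp h₃).resolve_left h4⟩
  linear_combination (norm := module) h₁

theorem polarized_square (h2 : (2 : K) ≠ 0) (h3 : (3 : K) ≠ 0)
    (hbern : ∀ x : A, (x * x) * (x * x) = ω x ^ 2 • (x * x))
    (he : IsIdempotentElem e) (he1 : ω e = 1) {n m : A} (hn : ω n = 0) (hm : ω m = 0) :
    (8 : K) • ((e * n) * (e * m)) + (4 : K) • (e * (n * m)) = (2 : K) • (n * m) := by
  have h := (peirce_identities h2 h3 hbern he he1 (n := n + m) (by simp [hn, hm])).2.1
  simp only [mul_add, add_mul, mul_comm m n, mul_comm (e * m) (e * n)] at h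
  linear_combination (norm := module) h - (peirce_identities h2 h3 hbern he he1 hn).2.1
    - (peirce_identities h2 h3 hbern he he1 hm).2.1

theorem polarized_cube (h2 : (2 : K) ≠ 0) (h3 : (3 : K) ≠ 0)
    (hbern : ∀ x : A, (x * x) * (x * x) = ω x ^ 2 • (x * x))
    (he : IsIdempotentElem e) (he1 : ω e = 1) {a b c : A} (ha : ω a = 0) (hb : ω b = 0)
    (hc : ω c = 0) :
    (e * a) * (b * c) + (e * b) * (a * c) + (e * c) * (a * b) = 0 := by
  have cube : ∀ n, ω n = 0 → (e * n) * (n * n) = 0 := fun n hn =>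
    (peirce_identities h2 h3 hbern he he1 hn).2.2
  have habc := cube (a + b + c) (by simp [ha, hb, hc])
  have hab := cube (a + b) (by simp [ha, hb])
  have hac := cube (a + c) (by simp [ha, hc])
  have hbc := cube (b + c) (by simp [hb, hc])
  simp only [mul_add, add_mul, mul_comm b a, mul_comm c a, mul_comm c b] at habc hab hac hbc
  refine (smul_eq_zero.mp ?_).resolve_left h2
  linear_combination (norm := module) habc - hab - hac - hbc + cube a ha + cube b hb + cube c hc

def peirceHalf (ω : A →ₗ[K] K) (e : A) : Submodule K A :=
  LinearMap.ker ω ⊓ LinearMap.ker ((2 : K) • LinearMap.mul K A e - LinearMap.id)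

def peirceZero (ω : A →ₗ[K] K) (e : A) : Submodule K A :=
  LinearMap.ker ω ⊓ LinearMap.ker (LinearMap.mul K A e)

def peirceHalfAnnihilator (ω : A →ₗ[K] K) (e : A) : Submodule K A :=
  peirceHalf ω e ⊓ ⨅ v ∈ peirceHalf ω e, LinearMap.ker ((LinearMap.mul K A).flip v)

variable {x : A}

theorem mem_peirceHalf : x ∈ peirceHalf ω e ↔ ω x = 0 ∧ (2 : K) • (e * x) = x := by
  simp [peirceHalf, sub_eq_zero]

theorem mem_peirceZero : x ∈ peirceZero ω e ↔ ω x = 0 ∧ e * x = 0 := by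
  simp [peirceZero]

theorem mem_peirceHalfAnnihilator :
    x ∈ peirceHalfAnnihilator ω e ↔ x ∈ peirceHalf ω e ∧ ∀ v ∈ peirceHalf ω e, x * v = 0 := by
  simp [peirceHalfAnnihilator, mul_comm _ x]

theorem peirceHalf_le_ker : peirceHalf ω e ≤ LinearMap.ker ω := inf_le_left

theorem peirceZero_le_ker : peirceZero ω e ≤ LinearMap.ker ω := inf_le_left

theorem peirceHalf_inf_peirceZero : peirceHalf ω e ⊓ peirceZero ω e = ⊥ := by
  refine eq_bot_iff.mpr fun x hx => ?_
  obtain ⟨hxU, hxZ⟩ := Submodule.mem_inf.mp hx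
  rw [Submodule.mem_bot, ← (mem_peirceHalf.mp hxU).2, (mem_peirceZero.mp hxZ).2, smul_zero]

theorem two_smul_mul_mul_of_mem_peirceHalf {u : A} (hu : u ∈ peirceHalf ω e) (y : A) :
    (2 : K) • ((e * u) * y) = u * y := by
  rw [← smul_mul_assoc, (mem_peirceHalf.mp hu).2]

theorem span_sup_peirceHalf_sup_peirceZero_eq_top (h2 : (2 : K) ≠ 0) (h3 : (3 : K) ≠ 0)
    (hωmul : ∀ x y : A, ω (x * y) = ω x * ω y)
    (hbern : ∀ x : A, (x * x) * (x * x) = ω x ^ 2 • (x * x))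
    (he : IsIdempotentElem e) (he1 : ω e = 1) :
    K ∙ e ⊔ (peirceHalf ω e ⊔ peirceZero ω e) = ⊤ := by
  refine eq_top_iff.mpr fun x _ => ?_
  set n := x - ω x • e
  have hn : ω n = 0 := by simp [n, he1]
  have hen := (peirce_identities h2 h3 hbern he he1 hn).1
  have hu : (2 : K) • (e * n) ∈ peirceHalf ω e :=
    mem_peirceHalf.mpr ⟨by simp [hωmul, hn], by rw [mul_smul_comm, hen]⟩
  have hz : n - (2 : K) • (e * n) ∈ peirceZero ω e :=
    mem_peirceZero.mpr ⟨by simp [hωmul, hn], by rw [mul_sub, mul_smul_comm, hen, sub_self]⟩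
  have hx : x = ω x • e + ((2 : K) • (e * n) + (n - (2 : K) • (e * n))) := by
    simp only [n]; abel
  rw [hx]
  exact Submodule.add_mem_sup (Submodule.smul_mem _ _ (Submodule.mem_span_singleton_self e))
    (Submodule.add_mem_sup hu hz)

theorem mul_mem_peirceZero_of_mem_peirceHalf (h2 : (2 : K) ≠ 0) (h3 : (3 : K) ≠ 0)
    (hωmul : ∀ x y : A, ω (x * y) = ω x * ω y)
    (hbern : ∀ x : A, (x * x) * (x * x) = ω x ^ 2 • (x * x))
    (he : IsIdempotentElem e) (he1 : ω e = 1) {u v : A} (hu : u ∈ peirceHalf ω e)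
    (hv : v ∈ peirceHalf ω e) : u * v ∈ peirceZero ω e := by
  obtain ⟨hu0, hu2⟩ := mem_peirceHalf.mp hu
  obtain ⟨hv0, hv2⟩ := mem_peirceHalf.mp hv
  refine mem_peirceZero.mpr ⟨by simp [hωmul, hu0], ?_⟩
  have huv : u * v = (4 : K) • ((e * u) * (e * v)) := by
    calc u * v = ((2 : K) • (e * u)) * ((2 : K) • (e * v)) := by rw [hu2, hv2]
      _ = _ := by rw [smul_mul_smul_comm]; norm_num
  have h4 : (4 : K) • (e * (u * v)) = 0 := by
    linear_combination (norm := module)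
      polarized_square h2 h3 hbern he he1 hu0 hv0 + (2 : K) • huv
  exact (smul_eq_zero.mp h4).resolve_left (by simpa [show (4 : K) = 2 * 2 by norm_num] using h2)

theorem mul_mem_peirceHalf_of_mem_peirceZero_right (h2 : (2 : K) ≠ 0) (h3 : (3 : K) ≠ 0)
    (hωmul : ∀ x y : A, ω (x * y) = ω x * ω y)
    (hbern : ∀ x : A, (x * x) * (x * x) = ω x ^ 2 • (x * x))
    (he : IsIdempotentElem e) (he1 : ω e = 1) {u z : A} (hu : u ∈ peirceHalf ω e)
    (hz : z ∈ peirceZero ω e) : u * z ∈ peirceHalf ω e := by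
  obtain ⟨hu0, -⟩ := mem_peirceHalf.mp hu
  obtain ⟨hz0, hz2⟩ := mem_peirceZero.mp hz
  refine mem_peirceHalf.mpr ⟨by simp [hωmul, hu0], smul_right_injective A h2 ?_⟩
  have h := polarized_square h2 h3 hbern he he1 hu0 hz0
  rw [hz2, mul_zero, smul_zero, zero_add] at h
  linear_combination (norm := module) h

theorem mul_mem_peirceHalf_of_mem_peirceZero (h2 : (2 : K) ≠ 0) (h3 : (3 : K) ≠ 0)
    (hωmul : ∀ x y : A, ω (x * y) = ω x * ω y)
    (hbern : ∀ x : A, (x * x) * (x * x) = ω x ^ 2 • (x * x))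
    (he : IsIdempotentElem e) (he1 : ω e = 1) {z w : A} (hz : z ∈ peirceZero ω e)
    (hw : w ∈ peirceZero ω e) : z * w ∈ peirceHalf ω e := by
  obtain ⟨hz0, hz2⟩ := mem_peirceZero.mp hz
  obtain ⟨hw0, -⟩ := mem_peirceZero.mp hw
  refine mem_peirceHalf.mpr ⟨by simp [hωmul, hz0], smul_right_injective A h2 ?_⟩
  have h := polarized_square h2 h3 hbern he he1 hz0 hw0
  rw [hz2, zero_mul, smul_zero, zero_add] at h
  linear_combination (norm := module) h

theorem cyclic_sum_eq_zero_of_mem_peirceHalf (h2 : (2 : K) ≠ 0) (h3 : (3 : K) ≠ 0)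
    (hbern : ∀ x : A, (x * x) * (x * x) = ω x ^ 2 • (x * x))
    (he : IsIdempotentElem e) (he1 : ω e = 1) {a b c : A} (ha : a ∈ peirceHalf ω e)
    (hb : b ∈ peirceHalf ω e) (hc : c ∈ peirceHalf ω e) :
    a * (b * c) + b * (a * c) + c * (a * b) = 0 := by
  have h := polarized_cube h2 h3 hbern he he1 (mem_peirceHalf.mp ha).1 (mem_peirceHalf.mp hb).1
    (mem_peirceHalf.mp hc).1
  linear_combination (norm := module) (2 : K) • h - two_smul_mul_mul_of_mem_peirceHalf ha (b * c)
    - two_smul_mul_mul_of_mem_peirceHalf hb (a * c) - two_smul_mul_mul_of_mem_peirceHalf hc (a * b)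

theorem mul_mul_add_mul_mul_eq_zero_of_mem_peirceZero (h2 : (2 : K) ≠ 0) (h3 : (3 : K) ≠ 0)
    (hbern : ∀ x : A, (x * x) * (x * x) = ω x ^ 2 • (x * x))
    (he : IsIdempotentElem e) (he1 : ω e = 1) {a b z : A} (ha : a ∈ peirceHalf ω e)
    (hb : b ∈ peirceHalf ω e) (hz : z ∈ peirceZero ω e) :
    a * (b * z) + b * (a * z) = 0 := by
  obtain ⟨hz0, hz2⟩ := mem_peirceZero.mp hz
  have h := polarized_cube h2 h3 hbern he he1 (mem_peirceHalf.mp ha).1 (mem_peirceHalf.mp hb).1 hz0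
  rw [hz2, zero_mul, add_zero] at h
  linear_combination (norm := module) (2 : K) • h - two_smul_mul_mul_of_mem_peirceHalf ha (b * z)
    - two_smul_mul_mul_of_mem_peirceHalf hb (a * z)

theorem mul_mul_eq_zero_of_mem_peirceZero (h2 : (2 : K) ≠ 0) (h3 : (3 : K) ≠ 0)
    (hbern : ∀ x : A, (x * x) * (x * x) = ω x ^ 2 • (x * x))
    (he : IsIdempotentElem e) (he1 : ω e = 1) {a z w : A} (ha : a ∈ peirceHalf ω e)
    (hz : z ∈ peirceZero ω e) (hw : w ∈ peirceZero ω e) : a * (z * w) = 0 := by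
  obtain ⟨hz0, hz2⟩ := mem_peirceZero.mp hz
  obtain ⟨hw0, hw2⟩ := mem_peirceZero.mp hw
  have h := polarized_cube h2 h3 hbern he he1 (mem_peirceHalf.mp ha).1 hz0 hw0
  rw [hz2, hw2, zero_mul, zero_mul, add_zero, add_zero] at h
  rw [← two_smul_mul_mul_of_mem_peirceHalf ha, h, smul_zero]

theorem mul_mem_peirceHalfAnnihilator_of_mem_peirceZero (h2 : (2 : K) ≠ 0) (h3 : (3 : K) ≠ 0)
    (hωmul : ∀ x y : A, ω (x * y) = ω x * ω y)
    (hbern : ∀ x : A, (x * x) * (x * x) = ω x ^ 2 • (x * x))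
    (he : IsIdempotentElem e) (he1 : ω e = 1) {z w : A} (hz : z ∈ peirceZero ω e)
    (hw : w ∈ peirceZero ω e) : z * w ∈ peirceHalfAnnihilator ω e := by
  refine mem_peirceHalfAnnihilator.mpr
    ⟨mul_mem_peirceHalf_of_mem_peirceZero h2 h3 hωmul hbern he he1 hz hw, fun v hv => ?_⟩
  rw [mul_comm]
  exact mul_mul_eq_zero_of_mem_peirceZero h2 h3 hbern he he1 hv hz hw

theorem mul_mem_peirceHalfAnnihilator (h2 : (2 : K) ≠ 0) (h3 : (3 : K) ≠ 0)
    (hωmul : ∀ x y : A, ω (x * y) = ω x * ω y)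
    (hbern : ∀ x : A, (x * x) * (x * x) = ω x ^ 2 • (x * x))
    (he : IsIdempotentElem e) (he1 : ω e = 1) {z d : A} (hz : z ∈ peirceZero ω e)
    (hd : d ∈ peirceHalfAnnihilator ω e) : z * d ∈ peirceHalfAnnihilator ω e := by
  obtain ⟨hdU, hd0⟩ := mem_peirceHalfAnnihilator.mp hd
  rw [mul_comm]
  refine mem_peirceHalfAnnihilator.mpr
    ⟨mul_mem_peirceHalf_of_mem_peirceZero_right h2 h3 hωmul hbern he he1 hdU hz, fun v hv => ?_⟩
  have h := mul_mul_add_mul_mul_eq_zero_of_mem_peirceZero h2 h3 hbern he he1 hv hdU hz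
  rw [hd0 _ (mul_mem_peirceHalf_of_mem_peirceZero_right h2 h3 hωmul hbern he he1 hv hz),
    add_zero] at h
  rw [mul_comm, h]

theorem peirceZero_fg_of_acc (h2 : (2 : K) ≠ 0) (h3 : (3 : K) ≠ 0)
    (hωmul : ∀ x y : A, ω (x * y) = ω x * ω y)
    (hbern : ∀ x : A, (x * x) * (x * x) = ω x ^ 2 • (x * x))
    (he : IsIdempotentElem e) (he1 : ω e = 1)
    (hacc : ∀ f : ℕ → NonUnitalSubalgebra K A, (∀ k, ∀ x ∈ f k, ω x = 0) → Monotone f →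
      ∃ n, ∀ m, n ≤ m → f m = f n) :
    (peirceZero ω e).FG := by
  have hann : peirceHalfAnnihilator ω e ≤ peirceHalf ω e := inf_le_left
  refine Submodule.fg_of_acc_subalgebras hacc (D := peirceHalfAnnihilator ω e) ?_
    (sup_le peirceZero_le_ker (hann.trans peirceHalf_le_ker)) fun W hW x hx y hy => ?_
  · refine Submodule.fg_bot.of_le ?_
    rw [← peirceHalf_inf_peirceZero (ω := ω) (e := e), inf_comm]
    exact inf_le_inf_right _ hann
  · refine Submodule.mul_mem_sup (fun a ha b hb => ?_) (fun a ha d hd => ?_)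
      (fun d hd d' hd' => ?_) hx hy
    · exact Submodule.mem_sup_right
        (mul_mem_peirceHalfAnnihilator_of_mem_peirceZero h2 h3 hωmul hbern he he1 (hW ha) (hW hb))
    · exact Submodule.mem_sup_right
        (mul_mem_peirceHalfAnnihilator h2 h3 hωmul hbern he he1 (hW ha) hd)
    · rw [(mem_peirceHalfAnnihilator.mp hd).2 d' (hann hd')]
      exact zero_mem _

theorem peirceZero_mul_sup_le_peirceHalf (h2 : (2 : K) ≠ 0) (h3 : (3 : K) ≠ 0)
    (hωmul : ∀ x y : A, ω (x * y) = ω x * ω y)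
    (hbern : ∀ x : A, (x * x) * (x * x) = ω x ^ 2 • (x * x))
    (he : IsIdempotentElem e) (he1 : ω e = 1) :
    peirceZero ω e ⊛ (peirceHalf ω e ⊔ peirceZero ω e) ≤ peirceHalf ω e := by
  refine Submodule.map₂_le.mpr fun z hz y hy => ?_
  obtain ⟨u, hu, z', hz', rfl⟩ := Submodule.mem_sup.mp hy
  show z * (u + z') ∈ _
  rw [mul_add, mul_comm z u]
  exact add_mem (mul_mem_peirceHalf_of_mem_peirceZero_right h2 h3 hωmul hbern he he1 hu hz)
    (mul_mem_peirceHalf_of_mem_peirceZero h2 h3 hωmul hbern he he1 hz hz')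

theorem mul_mem_peirceZero_mul_sup (h2 : (2 : K) ≠ 0) (h3 : (3 : K) ≠ 0)
    (hωmul : ∀ x y : A, ω (x * y) = ω x * ω y)
    (hbern : ∀ x : A, (x * x) * (x * x) = ω x ^ 2 • (x * x))
    (he : IsIdempotentElem e) (he1 : ω e = 1) {U₁ U₂ : Submodule K A}
    (hU₁ : U₁ ≤ peirceHalf ω e) (hU₂ : U₂ ≤ peirceHalf ω e) {p u : A} (hp : p ∈ U₁ ⊛ U₂)
    (hu : u ∈ peirceHalf ω e) : p * u ∈ peirceZero ω e ⊛ (U₁ ⊔ U₂) := by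
  refine (Submodule.map₂_le.mpr fun a ha b hb => ?_ :
    U₁ ⊛ U₂ ≤ (peirceZero ω e ⊛ (U₁ ⊔ U₂)).comap ((LinearMap.mul K A).flip u)) hp
  have h := cyclic_sum_eq_zero_of_mem_peirceHalf h2 h3 hbern he he1 (hU₁ ha) (hU₂ hb) hu
  have hab : (a * b) * u = -((b * u) * a) - (a * u) * b := by
    linear_combination (norm := module) h + mul_comm (a * b) u + mul_comm (b * u) a
      + mul_comm (a * u) b
  simp only [Submodule.mem_comap, LinearMap.flip_apply, LinearMap.mul_apply', hab]
  exact sub_mem (neg_mem (Submodule.apply_mem_map₂ _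
      (mul_mem_peirceZero_of_mem_peirceHalf h2 h3 hωmul hbern he he1 (hU₂ hb) hu)
      (Submodule.mem_sup_left ha)))
    (Submodule.apply_mem_map₂ _
      (mul_mem_peirceZero_of_mem_peirceHalf h2 h3 hωmul hbern he he1 (hU₁ ha) hu)
      (Submodule.mem_sup_right hb))

theorem peirceHalf_fg_of_acc (h2 : (2 : K) ≠ 0) (h3 : (3 : K) ≠ 0)
    (hωmul : ∀ x y : A, ω (x * y) = ω x * ω y)
    (hbern : ∀ x : A, (x * x) * (x * x) = ω x ^ 2 • (x * x))
    (he : IsIdempotentElem e) (he1 : ω e = 1)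
    (hacc : ∀ f : ℕ → NonUnitalSubalgebra K A, (∀ k, ∀ x ∈ f k, ω x = 0) → Monotone f →
      ∃ n, ∀ m, n ≤ m → f m = f n)
    (hZ : (peirceZero ω e).FG) :
    (peirceHalf ω e).FG := by
  set U := peirceHalf ω e
  set Z := peirceZero ω e
  have hPZ : U ⊛ U ≤ Z := Submodule.map₂_le.mpr fun u hu v hv =>
    mul_mem_peirceZero_of_mem_peirceHalf h2 h3 hωmul hbern he he1 hu hv
  obtain ⟨U₁, hU₁, U₂, hU₂, hU₁fg, hU₂fg, hP⟩ :=
    Submodule.exists_fg_map₂_eq (LinearMap.mul K A) (hZ.of_le hPZ)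
  set F := Z ⊛ (U₁ ⊔ U₂ ⊔ Z)
  have hFU : F ≤ U := (Submodule.map₂_le_map₂_right (sup_le_sup_right (sup_le hU₁ hU₂) Z)).trans
    (peirceZero_mul_sup_le_peirceHalf h2 h3 hωmul hbern he he1)
  have hPU : ∀ p ∈ U ⊛ U, ∀ u ∈ U, p * u ∈ F := fun p hp u hu =>
    Submodule.map₂_le_map₂_right le_sup_left
      (mul_mem_peirceZero_mul_sup h2 h3 hωmul hbern he he1 hU₁ hU₂ (hP ▸ hp) hu)
  refine Submodule.fg_of_acc_subalgebras hacc (D := F ⊔ U ⊛ U) ?_ ?_ fun W hW x hx y hy => ?_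
  · exact ((hZ.map₂ _ ((hU₁fg.sup hU₂fg).sup hZ)).sup (hZ.of_le hPZ)).of_le inf_le_right
  · exact sup_le peirceHalf_le_ker (sup_le (hFU.trans peirceHalf_le_ker)
      (hPZ.trans peirceZero_le_ker))
  · rw [← sup_assoc] at hx hy ⊢
    have hWF : W ⊔ F ≤ U := sup_le hW hFU
    refine Submodule.mul_mem_sup (fun a ha b hb => ?_) (fun a ha p hp => ?_)
      (fun p hp p' hp' => ?_) hx hy
    · exact Submodule.mem_sup_right (Submodule.apply_mem_map₂ _ (hWF ha) (hWF hb))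
    · rw [mul_comm]
      exact Submodule.mem_sup_left (Submodule.mem_sup_right (hPU p hp a (hWF ha)))
    · exact Submodule.mem_sup_left (Submodule.mem_sup_right
        (Submodule.apply_mem_map₂ _ (hPZ hp) (Submodule.mem_sup_right (hPZ hp'))))

end Bernstein

/-- Let `A` be a Bernstein algebra over a field `K` of characteristic `≠ 2, 3`,
with weight function `ω` and barideal `N = ker ω`.  The following are equivalent:
(i) `A` satisfies the ascending chain condition on subalgebras;
(ii) `A` satisfies the ascending chain condition on subalgebras contained in `N`;
(iii) `A` is finite-dimensional over `K`. -/
theorem bernstein_acc_subalgebras {K A : Type*} [Field K]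
    [NonUnitalNonAssocCommRing A] [Module K A] [SMulCommClass K A A] [IsScalarTower K A A]
    (h2 : (2 : K) ≠ 0) (h3 : (3 : K) ≠ 0)
    (ω : A →ₗ[K] K) (hωmul : ∀ x y : A, ω (x * y) = ω x * ω y) (hω0 : ω ≠ 0)
    (hbern : ∀ x : A, (x * x) * (x * x) = ω x ^ 2 • (x * x)) :
    List.TFAE
      [ -- (i) a.c.c. on subalgebras
        ∀ f : ℕ → NonUnitalSubalgebra K A, Monotone f → ∃ n, ∀ m, n ≤ m → f m = f n,
        -- (ii) a.c.c. on subalgebras contained in N = ker ω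
        ∀ f : ℕ → NonUnitalSubalgebra K A, (∀ k, ∀ x ∈ f k, ω x = 0) → Monotone f →
          ∃ n, ∀ m, n ≤ m → f m = f n,
        -- (iii) finite-dimensionality
        FiniteDimensional K A ] := by
  tfae_have 1 → 2 := fun hacc f _ hf => hacc f hf
  tfae_have 2 → 3 := by
    intro hacc
    obtain ⟨e, he, he1⟩ := Bernstein.exists_isIdempotentElem hωmul hω0 hbern
    have hZ := Bernstein.peirceZero_fg_of_acc h2 h3 hωmul hbern he he1 hacc
    have hU := Bernstein.peirceHalf_fg_of_acc h2 h3 hωmul hbern he he1 hacc hZ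
    refine Module.finite_def.mpr ?_
    rw [← Bernstein.span_sup_peirceHalf_sup_peirceZero_eq_top h2 h3 hωmul hbern he he1]
    exact (Submodule.fg_span_singleton e).sup (hU.sup hZ)
  tfae_have 3 → 1 := fun _ => NonUnitalSubalgebra.exists_eq_of_monotone
  tfae_finish
end

section
/- Let A be a Bernstein algebra over a field K of characteristic ≠ 2, 3, with weight function ω and barideal N = ker(ω). The following are equivalent: (i) A satisfies the descending chain condition on subalgebras; (ii) A satisfies the descending chain condition on subalgebras contained in N; (iii) A is finite-dimensional over K. -/
/-!
Choose an idempotent `e` of weight `1` (the square of any element of weight `1`) and split the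
barideal `N = U ⊕ V` into the Peirce spaces `U = {u | e u = u / 2}` and `V = {v | e v = 0}`.
Expanding `((e + t n)²)² = (e + t n)²` in `t` and polarizing gives the multiplication rules
`U U ⊆ V`, `V V ⊆ U`, `U (V V) = 0`, `(V V)(U U) = 0` and `(u v)(u v') = (v u)(v u') = 0`.

Under the chain condition on subalgebras of `N`, a subspace `W ⊆ N` with `W W` contained in a
finite-dimensional `C ⊆ W` is finite-dimensional, because every subspace between `C` and `W` is a
subalgebra. Applied in turn, this makes `V V`, `U U + V V`, the annihilator of `U U` in `U`, then
`U` itself (the maps `u ↦ u w`, `w` in a finite spanning set of `U U`, have images with zero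
multiplication), `U V`, and finally `N` finite-dimensional, since `N N ⊆ U U + U V + V V`.
-/

namespace BernsteinDCC

theorem eq_zero_of_forall_quartic {K M : Type*} [Field K] [AddCommGroup M] [Module K M]
    (h2 : (2 : K) ≠ 0) (h3 : (3 : K) ≠ 0) {c₁ c₂ c₃ c₄ : M}
    (h : ∀ t : K, t • c₁ + t ^ 2 • c₂ + t ^ 3 • c₃ + t ^ 4 • c₄ = 0) :
    c₁ = 0 ∧ c₂ = 0 ∧ c₃ = 0 ∧ c₄ = 0 := by
  have h12 : (12 : K) ≠ 0 := by
    rw [show (12 : K) = 2 * 2 * 3 by norm_num]; exact mul_ne_zero (mul_ne_zero h2 h2) h3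
  have h24 : (24 : K) ≠ 0 := by
    rw [show (24 : K) = 2 * 12 by norm_num]; exact mul_ne_zero h2 h12
  have hc₄ : c₄ = 0 := (smul_eq_zero_iff_right h24).mp <| by
    linear_combination (norm := module) (-4 : K) • h 1 - (4 : K) • h (-1) + h 2 + h (-2)
  have hc₃ : c₃ = 0 := (smul_eq_zero_iff_right h12).mp <| by
    linear_combination (norm := module) (-2 : K) • h 1 + (2 : K) • h (-1) + h 2 - h (-2)
  have hc₂ : c₂ = 0 := (smul_eq_zero_iff_right h2).mp <| by
    linear_combination (norm := module) h 1 + h (-1) - (2 : K) • hc₄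
  have hc₁ : c₁ = 0 := (smul_eq_zero_iff_right h2).mp <| by
    linear_combination (norm := module) h 1 - h (-1) - (2 : K) • hc₃
  exact ⟨hc₁, hc₂, hc₃, hc₄⟩

theorem finiteDimensional_of_map_of_inf_iInf_ker {K V W ι : Type*} [Field K] [AddCommGroup V]
    [Module K V] [AddCommGroup W] [Module K W] [Finite ι] (f : ι → V →ₗ[K] W) (P : Submodule K V)
    (hmap : ∀ i, FiniteDimensional K (P.map (f i)))
    (hker : FiniteDimensional K (P ⊓ ⨅ i, LinearMap.ker (f i) : Submodule K V)) :
    FiniteDimensional K P := by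
  simp_rw [← Submodule.fg_iff_finiteDimensional] at hmap hker ⊢
  refine Submodule.fg_of_fg_map_of_fg_inf_ker (LinearMap.pi f) ?_ (by rwa [LinearMap.ker_pi])
  refine (Submodule.fg_pi hmap).of_le ?_
  rintro _ ⟨x, hx, rfl⟩ i -
  exact ⟨x, hx, rfl⟩

variable {K A : Type*} [Field K] [NonUnitalNonAssocCommRing A] [Module K A]
variable {ω : A →ₗ[K] K} (h2 : (2 : K) ≠ 0) (h3 : (3 : K) ≠ 0)
variable (hωmul : ∀ x y : A, ω (x * y) = ω x * ω y)
variable (hbern : ∀ x : A, (x * x) * (x * x) = ω x ^ 2 • (x * x))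

section Barideal
include hbern

theorem mul_self_mul_self_eq_zero {n : A} (hn : ω n = 0) : (n * n) * (n * n) = 0 := by
  simpa [hn] using hbern n

include h2

theorem mul_self_mul_self_polar₂ {n m : A} (hn : ω n = 0) (hm : ω m = 0) :
    (2 : K) • ((n * m) * (n * m)) + (n * n) * (m * m) = 0 := by
  have hadd := mul_self_mul_self_eq_zero hbern (n := n + m) (by simp [hn, hm])
  have hsub := mul_self_mul_self_eq_zero hbern (n := n - m) (by simp [hn, hm])
  have hn' := mul_self_mul_self_eq_zero hbern hn
  have hm' := mul_self_mul_self_eq_zero hbern hm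
  simp only [mul_add, add_mul, mul_sub, sub_mul] at hadd hsub
  simp only [mul_comm] at hadd hsub hn' hm' ⊢
  have h4 : (4 : K) ≠ 0 := by rw [show (4 : K) = 2 * 2 by norm_num]; exact mul_ne_zero h2 h2
  refine (smul_eq_zero_iff_right h4).mp ?_
  linear_combination (norm := module) hadd + hsub - (2 : K) • hn' - (2 : K) • hm'

theorem mul_self_mul_self_polar₃ {n m p : A} (hn : ω n = 0) (hm : ω m = 0)
    (hp : ω p = 0) : (2 : K) • ((n * m) * (n * p)) + (n * n) * (m * p) = 0 := by
  have hadd := mul_self_mul_self_polar₂ h2 hbern hn (m := m + p) (by simp [hm, hp])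
  have hm' := mul_self_mul_self_polar₂ h2 hbern hn hm
  have hp' := mul_self_mul_self_polar₂ h2 hbern hn hp
  simp only [mul_add, add_mul] at hadd
  simp only [mul_comm] at hadd hm' hp' ⊢
  refine (smul_eq_zero_iff_right h2).mp ?_
  linear_combination (norm := module) hadd - hm' - hp'

theorem mul_mul_mul_eq_zero {x y z : A} (hx : ω x = 0) (hy : ω y = 0) (hz : ω z = 0)
    (h : (x * x) * (y * z) = 0) : (x * y) * (x * z) = 0 := by
  have hpolar := mul_self_mul_self_polar₃ h2 hbern hx hy hz
  rwa [h, add_zero, smul_eq_zero_iff_right h2] at hpolar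

end Barideal

include hωmul hbern in
theorem exists_idempotent (hω0 : ω ≠ 0) : ∃ e : A, e * e = e ∧ ω e = 1 := by
  obtain ⟨y, hy⟩ : ∃ y, ω y ≠ 0 := by simpa [LinearMap.ext_iff] using hω0
  have hωa : ω ((ω y)⁻¹ • y) = 1 := by simp [hy]
  refine ⟨((ω y)⁻¹ • y) * ((ω y)⁻¹ • y), ?_, by rw [hωmul, hωa, one_mul]⟩
  simpa [hωa] using hbern ((ω y)⁻¹ • y)

def DCCSubalgebrasWithin (S : Submodule K A) : Prop :=
  ∀ f : ℕ → NonUnitalSubalgebra K A, (∀ k, ∀ x ∈ f k, x ∈ S) → Antitone f →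
    ∃ n, ∀ m, n ≤ m → f m = f n

theorem dcc_of_finiteDimensional [FiniteDimensional K A] (f : ℕ → NonUnitalSubalgebra K A)
    (hf : Antitone f) : ∃ n, ∀ m, n ≤ m → f m = f n := by
  obtain ⟨n, hn⟩ := IsArtinian.monotone_stabilizes (R := K) (M := A)
    ⟨fun k => OrderDual.toDual (f k).toSubmodule, fun k l hkl => hf hkl⟩
  exact ⟨n, fun m hm => NonUnitalSubalgebra.toSubmodule_injective (hn m hm).symm⟩

variable [SMulCommClass K A A]

variable (ω) in
def peirceHalf (e : A) : Submodule K A :=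
  LinearMap.ker ω ⊓ LinearMap.ker ((2 : K) • LinearMap.mulLeft K e - LinearMap.id)

variable (ω) in
def peirceZero (e : A) : Submodule K A :=
  LinearMap.ker ω ⊓ LinearMap.ker (LinearMap.mulLeft K e)

theorem mem_peirceHalf {e x : A} : x ∈ peirceHalf ω e ↔ ω x = 0 ∧ (2 : K) • (e * x) = x := by
  simp [peirceHalf, sub_eq_zero]

theorem mem_peirceZero {e x : A} : x ∈ peirceZero ω e ↔ ω x = 0 ∧ e * x = 0 := by
  simp [peirceZero]

variable [IsScalarTower K A A]

local notation:70 P:70 " ⊙ " Q:71 => Submodule.map₂ (LinearMap.mul K A) P Q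

theorem map₂_mul_comm (P Q : Submodule K A) : P ⊙ Q = Q ⊙ P := by
  rw [← Submodule.map₂_flip]
  congr 1
  ext x y
  exact mul_comm y x

theorem mul_eq_zero_of_map₂_eq_bot {P Q : Submodule K A} (h : P ⊙ Q = ⊥) {x y : A} (hx : x ∈ P)
    (hy : y ∈ Q) : x * y = 0 := by
  simpa [h] using Submodule.apply_mem_map₂ (LinearMap.mul K A) hx hy

theorem map₂_sup_le_of_map₂_eq_bot {P W : Submodule K A} (hPW : P ⊙ W = ⊥) (hP : P ⊙ P ≤ W)
    (hW : W ⊙ W ≤ W) : (P ⊔ W) ⊙ (P ⊔ W) ≤ W := by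
  rw [Submodule.map₂_sup_left, Submodule.map₂_sup_right, Submodule.map₂_sup_right,
    map₂_mul_comm W P, hPW, sup_bot_eq, bot_sup_eq]
  exact sup_le hP hW

theorem map₂_mul_map₂_le {P Q R C : Submodule K A}
    (h : ∀ p ∈ P, ∀ q ∈ Q, ∀ r ∈ R, p * (q * r) ∈ C) : P ⊙ (Q ⊙ R) ≤ C :=
  Submodule.map₂_le.2 fun p hp _ hx =>
    (Submodule.map₂_le (r := C.comap (LinearMap.mul K A p))).2 (h p hp) hx

theorem finiteDimensional_of_map₂_mul_le {S W C : Submodule K A} (hdcc : DCCSubalgebrasWithin S)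
    (hWS : W ≤ S) (hCW : C ≤ W) [FiniteDimensional K C] (hmul : W ⊙ W ≤ C) :
    FiniteDimensional K W := by
  set C' := C.comap W.subtype
  let lift : Submodule K (W ⧸ C') → Submodule K A := fun Q => (Q.comap C'.mkQ).map W.subtype
  have lift_injective : Function.Injective lift :=
    (Submodule.map_injective_of_injective W.injective_subtype).comp
      (Submodule.comap_injective_of_surjective C'.mkQ_surjective)
  have lift_le (Q) : lift Q ≤ W := Submodule.map_subtype_le _ _
  have le_lift (Q) : C ≤ lift Q := fun c hc => ⟨⟨c, hCW hc⟩, by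
    simp [(Submodule.Quotient.mk_eq_zero C' (x := ⟨c, hCW hc⟩)).2 hc], rfl⟩
  -- every subspace between `C` and `W` is a subalgebra
  let sub (Q : Submodule K (W ⧸ C')) : NonUnitalSubalgebra K A :=
    { lift Q with
      mul_mem' := fun hx hy =>
        le_lift Q (hmul (Submodule.apply_mem_map₂ _ (lift_le Q hx) (lift_le Q hy))) }
  have : IsArtinian K (W ⧸ C') := monotone_stabilizes_iff_artinian.mp fun f => by
    obtain ⟨n, hn⟩ := hdcc (sub ∘ f) (fun k x hx => hWS (lift_le _ hx))
      (fun k l hkl => Submodule.map_mono (Submodule.comap_mono (f.monotone hkl)))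
    exact ⟨n, fun m hm => lift_injective (congrArg NonUnitalSubalgebra.toSubmodule (hn m hm)).symm⟩
  have : Module.Finite K (W ⧸ C') := IsSemiprimaryRing.finite_of_isArtinian K K _
  have : Module.Finite K C' := Module.Finite.equiv (Submodule.comapSubtypeEquivOfLe hCW).symm
  exact Module.Finite.of_submodule_quotient C'

theorem finiteDimensional_map₂_mul_of_forall {U V : Submodule K A} [FiniteDimensional K U]
    (h : ∀ u ∈ U, FiniteDimensional K (V.map (LinearMap.mul K A u))) :
    FiniteDimensional K (U ⊙ V) := by
  obtain ⟨s, rfl⟩ := (Submodule.fg_iff_finiteDimensional U).mpr ‹_›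
  have hs : Submodule.span K (s : Set A) = ⨆ u : s, K ∙ (u : A) := by
    rw [← Submodule.span_range_eq_iSup, Subtype.range_coe]
  have (u : s) := h u (Submodule.subset_span u.2)
  rw [hs, Submodule.map₂_iSup_left,
    iSup_congr fun u : s => congrFun (Submodule.map₂_span_singleton_eq_map _ (u : A)) V]
  infer_instance

section Idempotent
variable {e : A} (he : e * e = e) (hωe : ω e = 1)
include hbern he hωe

theorem bernstein_expansion {n : A} (hn : ω n = 0) (t : K) :
    t • ((4 : K) • (e * (e * n)) - (2 : K) • (e * n))
      + t ^ 2 • ((4 : K) • ((e * n) * (e * n)) + (2 : K) • (e * (n * n)) - n * n)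
      + t ^ 3 • ((4 : K) • ((e * n) * (n * n))) + t ^ 4 • ((n * n) * (n * n)) = 0 := by
  have hsq : (e + t • n) * (e + t • n) = e + (2 * t) • (e * n) + t ^ 2 • (n * n) := by
    simp only [mul_add, add_mul, smul_mul_assoc, mul_smul_comm, he, mul_comm n e]
    module
  have hω : ω (e + t • n) = 1 := by simp [hωe, hn]
  have hb := hbern (e + t • n)
  rw [hsq, hω, one_pow, one_smul] at hb
  simp only [mul_add, add_mul, smul_mul_assoc, mul_smul_comm, he] at hb
  simp only [mul_comm] at hb ⊢
  linear_combination (norm := module) hb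

include h2 h3

theorem two_smul_mul_mul_eq_mul {n : A} (hn : ω n = 0) : (2 : K) • (e * (e * n)) = e * n := by
  have h := (eq_zero_of_forall_quartic h2 h3 (bernstein_expansion hbern he hωe hn)).1
  exact sub_eq_zero.mp <| (smul_eq_zero_iff_right h2).mp <| by
    linear_combination (norm := module) h

theorem peirce_quadratic {n : A} (hn : ω n = 0) :
    (4 : K) • ((e * n) * (e * n)) + (2 : K) • (e * (n * n)) = n * n :=
  sub_eq_zero.mp (eq_zero_of_forall_quartic h2 h3 (bernstein_expansion hbern he hωe hn)).2.1

theorem peirce_cubic {n : A} (hn : ω n = 0) : (e * n) * (n * n) = 0 := by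
  have h4 : (4 : K) ≠ 0 := by rw [show (4 : K) = 2 * 2 by norm_num]; exact mul_ne_zero h2 h2
  exact (smul_eq_zero_iff_right h4).mp
    (eq_zero_of_forall_quartic h2 h3 (bernstein_expansion hbern he hωe hn)).2.2.1

theorem peirce_quadratic_polar {n m : A} (hn : ω n = 0) (hm : ω m = 0) :
    (4 : K) • ((e * n) * (e * m)) + (2 : K) • (e * (n * m)) = n * m := by
  have hadd := peirce_quadratic h2 h3 hbern he hωe (n := n + m) (by simp [hn, hm])
  have hn' := peirce_quadratic h2 h3 hbern he hωe hn
  have hm' := peirce_quadratic h2 h3 hbern he hωe hm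
  simp only [mul_add, add_mul, smul_add] at hadd
  simp only [mul_comm] at hadd hn' hm' ⊢
  refine sub_eq_zero.mp <| (smul_eq_zero_iff_right h2).mp ?_
  linear_combination (norm := module) hadd - hn' - hm'

theorem peirce_cubic_polar {n m p : A} (hn : ω n = 0) (hm : ω m = 0) (hp : ω p = 0) :
    (e * n) * (m * p) + (e * m) * (n * p) + (e * p) * (n * m) = 0 := by
  have h := peirce_cubic h2 h3 hbern he hωe (n := n + m + p) (by simp [hn, hm, hp])
  have hnm := peirce_cubic h2 h3 hbern he hωe (n := n + m) (by simp [hn, hm])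
  have hnp := peirce_cubic h2 h3 hbern he hωe (n := n + p) (by simp [hn, hp])
  have hmp := peirce_cubic h2 h3 hbern he hωe (n := m + p) (by simp [hm, hp])
  have hn' := peirce_cubic h2 h3 hbern he hωe hn
  have hm' := peirce_cubic h2 h3 hbern he hωe hm
  have hp' := peirce_cubic h2 h3 hbern he hωe hp
  simp only [mul_add, add_mul] at h hnm hnp hmp
  simp only [mul_comm] at h hnm hnp hmp hn' hm' hp' ⊢
  refine (smul_eq_zero_iff_right h2).mp ?_
  linear_combination (norm := module) h - hnm - hnp - hmp + hn' + hm' + hp'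

theorem peirceHalf_map₂_peirceZero_eq_bot :
    peirceHalf ω e ⊙ (peirceZero ω e ⊙ peirceZero ω e) = ⊥ := by
  refine le_bot_iff.1 (map₂_mul_map₂_le fun u hu v hv v' hv' => ?_)
  rw [mem_peirceHalf] at hu
  rw [mem_peirceZero] at hv hv'
  have h := peirce_cubic_polar h2 h3 hbern he hωe hu.1 hv.1 hv'.1
  rw [hv.2, hv'.2, zero_mul, zero_mul, add_zero, add_zero] at h
  rw [Submodule.mem_bot, ← hu.2, smul_mul_assoc, h, smul_zero]

theorem mul_mul_eq_zero_of_mul_eq_zero {u u' w : A} (hu : u ∈ peirceHalf ω e)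
    (hu' : u' ∈ peirceHalf ω e) (hw : w ∈ peirceHalf ω e) (huw : u * w = 0) (hu'w : u' * w = 0) :
    w * (u * u') = 0 := by
  rw [mem_peirceHalf] at hu hu' hw
  have h := peirce_cubic_polar h2 h3 hbern he hωe hu.1 hu'.1 hw.1
  rw [huw, hu'w, mul_zero, mul_zero, zero_add, zero_add] at h
  rw [← hw.2, smul_mul_assoc, h, smul_zero]

include hωmul

theorem peirceHalf_sup_peirceZero : peirceHalf ω e ⊔ peirceZero ω e = LinearMap.ker ω := by
  refine le_antisymm (sup_le inf_le_left inf_le_left) fun n hn => ?_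
  have hen := two_smul_mul_mul_eq_mul h2 h3 hbern he hωe hn
  rw [← add_sub_cancel ((2 : K) • (e * n)) n]
  refine Submodule.add_mem_sup (mem_peirceHalf.2 ⟨by simp [hωmul, LinearMap.mem_ker.1 hn], ?_⟩)
    (mem_peirceZero.2 ⟨by simp [hωmul, LinearMap.mem_ker.1 hn], ?_⟩)
  · rw [mul_smul_comm, smul_comm, hen]
  · rw [mul_sub, mul_smul_comm, hen, sub_self]

theorem mul_mem_peirceZero_of_peirceHalf {u u' : A} (hu : u ∈ peirceHalf ω e)
    (hu' : u' ∈ peirceHalf ω e) : u * u' ∈ peirceZero ω e := by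
  rw [mem_peirceHalf] at hu hu'
  have h := peirce_quadratic_polar h2 h3 hbern he hωe hu.1 hu'.1
  have h4 : (4 : K) • ((e * u) * (e * u')) = u * u' := by
    conv_rhs => rw [← hu.2, ← hu'.2]
    rw [smul_mul_assoc, mul_smul_comm, smul_smul]
    norm_num
  rw [h4, add_eq_left, smul_eq_zero_iff_right h2] at h
  exact mem_peirceZero.2 ⟨by simp [hωmul, hu.1], h⟩

theorem mul_mem_peirceHalf_of_peirceZero {v v' : A} (hv : v ∈ peirceZero ω e)
    (hv' : v' ∈ peirceZero ω e) : v * v' ∈ peirceHalf ω e := by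
  rw [mem_peirceZero] at hv hv'
  have h := peirce_quadratic_polar h2 h3 hbern he hωe hv.1 hv'.1
  rw [hv.2, hv'.2, mul_zero, smul_zero, zero_add] at h
  exact mem_peirceHalf.2 ⟨by simp [hωmul, hv.1], h⟩

theorem map₂_peirceHalf_le : peirceHalf ω e ⊙ peirceHalf ω e ≤ peirceZero ω e :=
  Submodule.map₂_le.2 fun _ hu _ hu' =>
    mul_mem_peirceZero_of_peirceHalf h2 h3 hωmul hbern he hωe hu hu'

theorem map₂_peirceZero_le : peirceZero ω e ⊙ peirceZero ω e ≤ peirceHalf ω e :=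
  Submodule.map₂_le.2 fun _ hv _ hv' =>
    mul_mem_peirceHalf_of_peirceZero h2 h3 hωmul hbern he hωe hv hv'

theorem map₂_peirceZero_map₂_peirceHalf_eq_bot :
    (peirceZero ω e ⊙ peirceZero ω e) ⊙ (peirceHalf ω e ⊙ peirceHalf ω e) = ⊥ := by
  refine le_bot_iff.1 (map₂_mul_map₂_le fun w hw u hu u' hu' => ?_)
  have hvanish (x) (hx : x ∈ peirceHalf ω e) : x * w = 0 :=
    mul_eq_zero_of_map₂_eq_bot (peirceHalf_map₂_peirceZero_eq_bot h2 h3 hbern he hωe) hx hw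
  exact mul_mul_eq_zero_of_mul_eq_zero h2 h3 hbern he hωe hu hu'
    (map₂_peirceZero_le h2 h3 hωmul hbern he hωe hw) (hvanish u hu) (hvanish u' hu')

theorem mul_mul_mul_eq_zero_of_peirceHalf {u v v' : A} (hu : u ∈ peirceHalf ω e)
    (hv : v ∈ peirceZero ω e) (hv' : v' ∈ peirceZero ω e) : (u * v) * (u * v') = 0 := by
  refine mul_mul_mul_eq_zero h2 hbern (mem_peirceHalf.1 hu).1 (mem_peirceZero.1 hv).1
    (mem_peirceZero.1 hv').1 ?_
  rw [mul_comm]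
  exact mul_eq_zero_of_map₂_eq_bot (map₂_peirceZero_map₂_peirceHalf_eq_bot h2 h3 hωmul hbern he hωe)
    (Submodule.apply_mem_map₂ _ hv hv') (Submodule.apply_mem_map₂ _ hu hu)

theorem mul_mul_mul_eq_zero_of_peirceZero {v u u' : A} (hv : v ∈ peirceZero ω e)
    (hu : u ∈ peirceHalf ω e) (hu' : u' ∈ peirceHalf ω e) : (v * u) * (v * u') = 0 :=
  mul_mul_mul_eq_zero h2 hbern (mem_peirceZero.1 hv).1 (mem_peirceHalf.1 hu).1
    (mem_peirceHalf.1 hu').1 <|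
      mul_eq_zero_of_map₂_eq_bot (map₂_peirceZero_map₂_peirceHalf_eq_bot h2 h3 hωmul hbern he hωe)
        (Submodule.apply_mem_map₂ _ hv hv) (Submodule.apply_mem_map₂ _ hu hu')

theorem map₂_mul_sup_le :
    (peirceHalf ω e ⊙ peirceHalf ω e ⊔ peirceZero ω e ⊙ peirceZero ω e) ⊙
        (peirceHalf ω e ⊙ peirceHalf ω e ⊔ peirceZero ω e ⊙ peirceZero ω e) ≤
      peirceZero ω e ⊙ peirceZero ω e := by
  have hUU := map₂_peirceHalf_le h2 h3 hωmul hbern he hωe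
  have hVV := map₂_peirceZero_le h2 h3 hωmul hbern he hωe
  rw [Submodule.map₂_sup_left, Submodule.map₂_sup_right, Submodule.map₂_sup_right,
    map₂_mul_comm (peirceHalf ω e ⊙ peirceHalf ω e) (peirceZero ω e ⊙ peirceZero ω e),
    map₂_peirceZero_map₂_peirceHalf_eq_bot h2 h3 hωmul hbern he hωe,
    le_bot_iff.1 ((Submodule.map₂_le_map₂_left hVV).trans
      (peirceHalf_map₂_peirceZero_eq_bot h2 h3 hbern he hωe).le)]
  simp only [sup_bot_eq]
  exact Submodule.map₂_le_map₂ hUU hUU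

section Finiteness
variable (hdcc : DCCSubalgebrasWithin (LinearMap.ker ω))
include hdcc

theorem finiteDimensional_map₂_peirceZero :
    FiniteDimensional K (peirceZero ω e ⊙ peirceZero ω e) := by
  have hVV := map₂_peirceZero_le h2 h3 hωmul hbern he hωe
  refine finiteDimensional_of_map₂_mul_le hdcc (hVV.trans inf_le_left) bot_le ?_
  rw [← peirceHalf_map₂_peirceZero_eq_bot h2 h3 hbern he hωe]
  exact Submodule.map₂_le_map₂_left hVV

theorem finiteDimensional_map₂_sup :
    FiniteDimensional K
      (peirceHalf ω e ⊙ peirceHalf ω e ⊔ peirceZero ω e ⊙ peirceZero ω e : Submodule K A) := by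
  have := finiteDimensional_map₂_peirceZero h2 h3 hωmul hbern he hωe hdcc
  refine finiteDimensional_of_map₂_mul_le hdcc ?_ le_sup_right
    (map₂_mul_sup_le h2 h3 hωmul hbern he hωe)
  exact sup_le ((map₂_peirceHalf_le h2 h3 hωmul hbern he hωe).trans inf_le_left)
    ((map₂_peirceZero_le h2 h3 hωmul hbern he hωe).trans inf_le_left)

theorem finiteDimensional_annihilator {T : Set A}
    (hT : Submodule.span K T = peirceHalf ω e ⊙ peirceHalf ω e) :
    FiniteDimensional K
      (peirceHalf ω e ⊓ ⨅ w : T, LinearMap.ker (LinearMap.mulRight K (w : A)) : Submodule K A) := by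
  set U₀ := (peirceHalf ω e ⊓ ⨅ w : T, LinearMap.ker (LinearMap.mulRight K (w : A)) :
    Submodule K A)
  set W := (peirceHalf ω e ⊙ peirceHalf ω e ⊔ peirceZero ω e ⊙ peirceZero ω e : Submodule K A)
  have : FiniteDimensional K W := finiteDimensional_map₂_sup h2 h3 hωmul hbern he hωe hdcc
  have hU₀U : U₀ ⊙ (peirceHalf ω e ⊙ peirceHalf ω e) = ⊥ := by
    refine le_bot_iff.1 (Submodule.map₂_le.2 fun x hx y hy => ?_)
    refine (hT ▸ Submodule.span_le.2 fun w hw => ?_ : _ ≤ LinearMap.ker (LinearMap.mul K A x)) hy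
    exact (Submodule.mem_iInf _).1 (Submodule.mem_inf.1 hx).2 ⟨w, hw⟩
  have hU₀V : U₀ ⊙ (peirceZero ω e ⊙ peirceZero ω e) = ⊥ :=
    le_bot_iff.1 ((Submodule.map₂_le_map₂_left inf_le_left).trans
      (peirceHalf_map₂_peirceZero_eq_bot h2 h3 hbern he hωe).le)
  have hmul := map₂_sup_le_of_map₂_eq_bot
    (by rw [Submodule.map₂_sup_right, hU₀U, hU₀V, sup_bot_eq])
    ((Submodule.map₂_le_map₂ inf_le_left inf_le_left).trans le_sup_left)
    ((map₂_mul_sup_le h2 h3 hωmul hbern he hωe).trans le_sup_right)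
  have hWker := sup_le ((map₂_peirceHalf_le h2 h3 hωmul hbern he hωe).trans inf_le_left)
      ((map₂_peirceZero_le h2 h3 hωmul hbern he hωe).trans inf_le_left)
  have : FiniteDimensional K (U₀ ⊔ W : Submodule K A) :=
    finiteDimensional_of_map₂_mul_le hdcc (sup_le (inf_le_left.trans inf_le_left) hWker)
      le_sup_right hmul
  exact Submodule.finiteDimensional_of_le (le_sup_left : U₀ ≤ U₀ ⊔ W)

theorem finiteDimensional_peirceHalf : FiniteDimensional K (peirceHalf ω e) := by
  have := finiteDimensional_map₂_sup h2 h3 hωmul hbern he hωe hdcc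
  have : FiniteDimensional K (peirceHalf ω e ⊙ peirceHalf ω e) :=
    Submodule.finiteDimensional_of_le (le_sup_left : _ ≤ _ ⊔ peirceZero ω e ⊙ peirceZero ω e)
  obtain ⟨T, hT⟩ := (Submodule.fg_iff_finiteDimensional _).mpr this
  refine finiteDimensional_of_map_of_inf_iInf_ker
    (fun w : (T : Set A) => LinearMap.mulRight K (w : A)) _ (fun w => ?_)
    (finiteDimensional_annihilator h2 h3 hωmul hbern he hωe hdcc hT)
  have hw : (w : A) ∈ peirceZero ω e :=
    map₂_peirceHalf_le h2 h3 hωmul hbern he hωe (hT ▸ Submodule.subset_span w.2)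
  refine finiteDimensional_of_map₂_mul_le hdcc ?_ bot_le ?_
  · rintro _ ⟨u, hu, rfl⟩
    simp [hωmul, (mem_peirceHalf.1 hu).1]
  · refine Submodule.map₂_le.2 ?_
    rintro _ ⟨u, hu, rfl⟩ _ ⟨u', hu', rfl⟩
    simpa [mul_comm _ (w : A)] using
      mul_mul_mul_eq_zero_of_peirceZero h2 h3 hωmul hbern he hωe hw hu hu'

theorem finiteDimensional_map₂_peirceHalf_peirceZero :
    FiniteDimensional K (peirceHalf ω e ⊙ peirceZero ω e) := by
  have := finiteDimensional_peirceHalf h2 h3 hωmul hbern he hωe hdcc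
  refine finiteDimensional_map₂_mul_of_forall fun u hu => ?_
  refine finiteDimensional_of_map₂_mul_le hdcc ?_ bot_le ?_
  · rintro _ ⟨v, -, rfl⟩
    simp [hωmul, (mem_peirceHalf.1 hu).1]
  · refine Submodule.map₂_le.2 ?_
    rintro _ ⟨v, hv, rfl⟩ _ ⟨v', hv', rfl⟩
    simpa using mul_mul_mul_eq_zero_of_peirceHalf h2 h3 hωmul hbern he hωe hu hv hv'

theorem finiteDimensional_ker : FiniteDimensional K (LinearMap.ker ω) := by
  have := finiteDimensional_map₂_sup h2 h3 hωmul hbern he hωe hdcc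
  have := finiteDimensional_map₂_peirceHalf_peirceZero h2 h3 hωmul hbern he hωe hdcc
  have : FiniteDimensional K (LinearMap.ker ω ⊙ LinearMap.ker ω) := by
    refine Submodule.finiteDimensional_of_le (?_ : _ ≤ (peirceHalf ω e ⊙ peirceHalf ω e ⊔
      peirceZero ω e ⊙ peirceZero ω e) ⊔ peirceHalf ω e ⊙ peirceZero ω e)
    rw [← peirceHalf_sup_peirceZero h2 h3 hωmul hbern he hωe, Submodule.map₂_sup_left,
      Submodule.map₂_sup_right, Submodule.map₂_sup_right,
      map₂_mul_comm (peirceZero ω e) (peirceHalf ω e)]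
    exact sup_le (sup_le (le_sup_left.trans le_sup_left) le_sup_right)
      (sup_le le_sup_right (le_sup_right.trans le_sup_left))
  refine finiteDimensional_of_map₂_mul_le hdcc le_rfl ?_ le_rfl
  exact Submodule.map₂_le.2 fun x hx y _ => by simp [hωmul, LinearMap.mem_ker.1 hx]

end Finiteness

end Idempotent

include h2 h3 hωmul hbern in
theorem finiteDimensional_of_dcc (hω0 : ω ≠ 0) (hdcc : DCCSubalgebrasWithin (LinearMap.ker ω)) :
    FiniteDimensional K A := by
  obtain ⟨e, he, hωe⟩ := exists_idempotent hωmul hbern hω0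
  have := finiteDimensional_ker h2 h3 hωmul hbern he hωe hdcc
  have : Module.Finite K (A ⧸ LinearMap.ker ω) := Module.Finite.equiv ω.quotKerEquivRange.symm
  exact Module.Finite.of_submodule_quotient (LinearMap.ker ω)

end BernsteinDCC

/-- Let `A` be a Bernstein algebra over a field `K` of characteristic `≠ 2, 3`,
with weight function `ω` and barideal `N = ker ω`.  The following are equivalent:
(i) `A` satisfies the descending chain condition on subalgebras;
(ii) `A` satisfies the descending chain condition on subalgebras contained in `N`;
(iii) `A` is finite-dimensional over `K`. -/
theorem bernstein_dcc_subalgebras {K A : Type*} [Field K]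
    [NonUnitalNonAssocCommRing A] [Module K A] [SMulCommClass K A A] [IsScalarTower K A A]
    (h2 : (2 : K) ≠ 0) (h3 : (3 : K) ≠ 0)
    (ω : A →ₗ[K] K) (hωmul : ∀ x y : A, ω (x * y) = ω x * ω y) (hω0 : ω ≠ 0)
    (hbern : ∀ x : A, (x * x) * (x * x) = ω x ^ 2 • (x * x)) :
    List.TFAE
      [ -- (i) d.c.c. on subalgebras
        ∀ f : ℕ → NonUnitalSubalgebra K A, Antitone f → ∃ n, ∀ m, n ≤ m → f m = f n,
        -- (ii) d.c.c. on subalgebras contained in N = ker ω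
        ∀ f : ℕ → NonUnitalSubalgebra K A, (∀ k, ∀ x ∈ f k, ω x = 0) → Antitone f →
          ∃ n, ∀ m, n ≤ m → f m = f n,
        -- (iii) finite-dimensionality
        FiniteDimensional K A ] := by
  tfae_have 1 → 2 := fun h f _ hf => h f hf
  tfae_have 2 → 3 := BernsteinDCC.finiteDimensional_of_dcc h2 h3 hωmul hbern hω0
  tfae_have 3 → 1 := fun _ => BernsteinDCC.dcc_of_finiteDimensional
  tfae_finish
end

section
/- Let A be a Bernstein algebra over a field K of characteristic ≠ 2, 3, with barideal N = ker(ω). Then A is Artinian (satisfies the descending chain condition on ideals of A) if and only if the algebra N is Artinian (satisfies the descending chain condition on ideals of N). -/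
/-!
Fix an idempotent `e` of weight one (say `e = ω(x)⁻² x²`) and put `P x = 2 e x`. Expanding the
Bernstein identity at `e + t n` and polarizing gives the Peirce identities on `N`: `P` projects `N`
onto `U = {u ∈ N | P u = u}` along `V = N ∩ ker P`, with `V N ⊆ U` and `U V² = 0`.

Both directions rest on the modular law: an antitone chain `f` with `f ⊓ z` and `f ⊔ z` eventually
constant is eventually constant. If `N` is Artinian, take `z = N`: `f ⊓ N` is a chain of ideals of
`N` and `f ⊔ N` is pulled back from `K`. If `A` is Artinian, take `z = U` and squeeze an ideal `I`
of `N` as `I ⊓ U ≤ core I ≤ I ≤ hull I ≤ I ⊔ U` between two ideals of `A`: the largest ideal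
`core I = {x ∈ I | P x ∈ I}` of `A` inside `I`, and `hull I = I + P I + S` with
`S = {s ∈ U | U s = 0}`, which is an ideal because `V` maps `V` and `S` into `S`.
-/

open Filter

theorem Antitone.eventuallyConst_of_inf_le_of_le_sup {α : Type*} [Lattice α]
    [IsModularLattice α] {f g h : ℕ → α} {z : α} (hf : Antitone f)
    (hg : atTop.EventuallyConst g) (hh : atTop.EventuallyConst h)
    (hfg : ∀ k, f k ⊓ z ≤ g k) (hgf : ∀ k, g k ≤ f k)
    (hfh : ∀ k, f k ≤ h k) (hhf : ∀ k, h k ≤ f k ⊔ z) :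
    atTop.EventuallyConst f := by
  obtain ⟨n, hn⟩ := eventuallyConst_atTop.mp (hg.prodMk hh)
  refine eventuallyConst_atTop.mpr ⟨n, fun m hm => ?_⟩
  obtain ⟨hgm, hhm⟩ := Prod.ext_iff.mp (hn m hm)
  refine eq_of_le_of_inf_le_of_sup_le (z := z) (hf hm) ?_ ?_
  · calc f n ⊓ z ≤ g n ⊓ z := le_inf (hfg n) inf_le_right
      _ = g m ⊓ z := congrArg (· ⊓ z) hgm.symm
      _ ≤ f m ⊓ z := inf_le_inf_right z (hgf m)
  · calc f n ⊔ z ≤ h n ⊔ z := sup_le_sup_right (hfh n) z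
      _ = h m ⊔ z := congrArg (· ⊔ z) hhm.symm
      _ ≤ f m ⊔ z := sup_le (hhf m) le_sup_right

theorem eq_zero_of_forall_smul_pow_add_eq_zero {K M : Type*} [Field K] [AddCommGroup M]
    [Module K M] (h2 : (2 : K) ≠ 0) (h3 : (3 : K) ≠ 0) {c₁ c₂ c₃ c₄ : M}
    (h : ∀ t : K, t • c₁ + t ^ 2 • c₂ + t ^ 3 • c₃ + t ^ 4 • c₄ = 0) :
    c₁ = 0 ∧ c₂ = 0 ∧ c₃ = 0 ∧ c₄ = 0 := by
  have h12 : (12 : K) ≠ 0 := by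
    have : (12 : K) = 2 * 2 * 3 := by norm_num
    simp [this, h2, h3]
  have h24 : (24 : K) ≠ 0 := by
    have : (24 : K) = 2 * 2 * 2 * 3 := by norm_num
    simp [this, h2, h3]
  have e₁ := h 1
  have e₂ := h (-1)
  have e₃ := h 2
  have e₄ := h (-2)
  have hc₃ : (12 : K) • c₃ = 0 := by
    linear_combination (norm := module) e₃ - e₄ - (2 : K) • e₁ + (2 : K) • e₂
  have hc₄ : (24 : K) • c₄ = 0 := by
    linear_combination (norm := module) e₃ + e₄ - (4 : K) • e₁ - (4 : K) • e₂
  rw [smul_eq_zero_iff_right h12] at hc₃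
  rw [smul_eq_zero_iff_right h24] at hc₄
  have hc₁ : (2 : K) • c₁ = 0 := by linear_combination (norm := module) e₁ - e₂ - (2 : K) • hc₃
  have hc₂ : (2 : K) • c₂ = 0 := by linear_combination (norm := module) e₁ + e₂ - (2 : K) • hc₄
  rw [smul_eq_zero_iff_right h2] at hc₁ hc₂
  exact ⟨hc₁, hc₂, hc₃, hc₄⟩

theorem stabilizes_of_ker_stabilizes {K A : Type*} [Field K] [NonUnitalNonAssocRing A]
    [Module K A] {ω : A →ₗ[K] K} (hωmul : ∀ x y : A, ω (x * y) = ω x * ω y)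
    (hN : ∀ f : ℕ → Submodule K A, (∀ k, f k ≤ LinearMap.ker ω) →
      (∀ k, ∀ a ∈ LinearMap.ker ω, ∀ x ∈ f k, a * x ∈ f k) → Antitone f →
      ∃ n, ∀ m, n ≤ m → f m = f n)
    {f : ℕ → Submodule K A} (hfI : ∀ k, ∀ a : A, ∀ x ∈ f k, a * x ∈ f k) (hf : Antitone f) :
    ∃ n, ∀ m, n ≤ m → f m = f n := by
  have hker := hN (fun k => f k ⊓ LinearMap.ker ω) (fun _ => inf_le_right)
    (fun k a ha x hx => ⟨hfI k a x hx.1, by simp [hωmul, LinearMap.mem_ker.mp ha]⟩)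
    (fun _ _ hij => inf_le_inf_right _ (hf hij))
  obtain ⟨n, hn⟩ := WellFoundedLT.antitone_chain_condition (f := fun k => (f k).map ω)
    fun _ _ hij => Submodule.map_mono (hf hij)
  have himage : atTop.EventuallyConst fun k => (f k).map ω :=
    eventuallyConst_atTop.mpr ⟨n, fun m hm => (hn m hm).symm⟩
  exact eventuallyConst_atTop.mp <| hf.eventuallyConst_of_inf_le_of_le_sup
    (eventuallyConst_atTop.mpr hker) (himage.comp (Submodule.comap ω))
    (fun _ => le_rfl) (fun _ => inf_le_left) (fun k => Submodule.le_comap_map ω (f k))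
    (fun k => (Submodule.comap_map_eq ω (f k)).le)

namespace BernsteinAlgebra

variable {K A : Type*} [Field K] [NonUnitalNonAssocCommRing A] [Module K A]

theorem polarize_quadratic (h2 : (2 : K) ≠ 0) {S : Submodule K A} (F : A →ₗ[K] A) {n m : A}
    (hn : n ∈ S) (hm : m ∈ S) (hF : ∀ x ∈ S, F (x * x) + F x * F x = x * x) :
    F n * F m + F (n * m) = n * m := by
  have hmn : m * n = n * m := mul_comm m n
  have hFmn : F m * F n = F n * F m := mul_comm _ _
  have h := hF (n + m) (S.add_mem hn hm)
  simp only [map_add, mul_add, add_mul, hmn, hFmn] at h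
  have : (2 : K) • (F n * F m + F (n * m)) = (2 : K) • (n * m) := by
    linear_combination (norm := module) h - hF n hn - hF m hm
  exact smul_right_injective A h2 this

theorem polarize_cubic (h2 : (2 : K) ≠ 0) {S : Submodule K A} (F : A →ₗ[K] A) {m n i : A}
    (hm : m ∈ S) (hn : n ∈ S) (hi : i ∈ S) (hF : ∀ x ∈ S, F x * (x * x) = 0) :
    F m * (n * i) + F n * (m * i) + F i * (m * n) = 0 := by
  have hD : ∀ x ∈ S, ∀ y ∈ S, (2 : K) • (F x * (x * y)) + F x * (y * y) + F y * (x * x)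
      + (2 : K) • (F y * (x * y)) = 0 := by
    intro x hx y hy
    have h := hF (x + y) (S.add_mem hx hy)
    have hyx : y * x = x * y := mul_comm y x
    simp only [map_add, mul_add, add_mul, hyx] at h
    linear_combination (norm := module) h - hF x hx - hF y hy
  have h := hD (n + i) (S.add_mem hn hi) m hm
  have hDn := hD n hn m hm
  have hDi := hD i hi m hm
  have hin : i * n = n * i := mul_comm i n
  have him : i * m = m * i := mul_comm i m
  have hnm : n * m = m * n := mul_comm n m
  simp only [map_add, mul_add, add_mul, hin, him, hnm] at h hDn hDi
  have : (2 : K) • (F m * (n * i) + F n * (m * i) + F i * (m * n)) = (2 : K) • 0 := by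
    linear_combination (norm := module) h - hDn - hDi
  exact smul_right_injective A h2 this

variable [SMulCommClass K A A]

variable (K) in
def peirceProj (e : A) : A →ₗ[K] A := (2 : K) • LinearMap.mulLeft K e

@[simp]
theorem peirceProj_apply (e x : A) : peirceProj K e x = (2 : K) • (e * x) := rfl

structure IsPeirceIdempotent (ω : A →ₗ[K] K) (e : A) : Prop where
  weight_eq_one : ω e = 1
  proj_proj : ∀ x ∈ LinearMap.ker ω, peirceProj K e (peirceProj K e x) = peirceProj K e x
  proj_mul_proj_add_proj_mul : ∀ x ∈ LinearMap.ker ω, ∀ y ∈ LinearMap.ker ω,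
    peirceProj K e x * peirceProj K e y + peirceProj K e (x * y) = x * y
  proj_mul_mul_add_add : ∀ x ∈ LinearMap.ker ω, ∀ y ∈ LinearMap.ker ω, ∀ z ∈ LinearMap.ker ω,
    peirceProj K e x * (y * z) + peirceProj K e y * (x * z) + peirceProj K e z * (x * y) = 0

def peirceHalf (ω : A →ₗ[K] K) (e : A) : Submodule K A :=
  LinearMap.ker ω ⊓ (peirceProj K e).eqLocus LinearMap.id

def peirceHalfAnn (ω : A →ₗ[K] K) (e : A) : Submodule K A :=
  peirceHalf ω e ⊓ ⨅ u ∈ peirceHalf ω e, LinearMap.ker (LinearMap.mulLeft K u)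

theorem mem_peirceHalf {ω : A →ₗ[K] K} {e u : A} :
    u ∈ peirceHalf ω e ↔ u ∈ LinearMap.ker ω ∧ peirceProj K e u = u := Iff.rfl

theorem mem_peirceHalfAnn {ω : A →ₗ[K] K} {e s : A} :
    s ∈ peirceHalfAnn ω e ↔ s ∈ peirceHalf ω e ∧ ∀ u ∈ peirceHalf ω e, u * s = 0 := by
  simp [peirceHalfAnn, Submodule.mem_iInf]

def core (e : A) (I : Submodule K A) : Submodule K A := I ⊓ I.comap (peirceProj K e)

def hull (ω : A →ₗ[K] K) (e : A) (I : Submodule K A) : Submodule K A :=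
  I ⊔ I.map (peirceProj K e) ⊔ peirceHalfAnn ω e

variable {ω : A →ₗ[K] K} {e : A}

theorem peirceProj_mem_ker (hωmul : ∀ x y : A, ω (x * y) = ω x * ω y) {x : A}
    (hx : x ∈ LinearMap.ker ω) : peirceProj K e x ∈ LinearMap.ker ω := by
  simp_all

namespace IsPeirceIdempotent

theorem proj_mem_peirceHalf (he : IsPeirceIdempotent ω e)
    (hωmul : ∀ x y : A, ω (x * y) = ω x * ω y) {x : A} (hx : x ∈ LinearMap.ker ω) :
    peirceProj K e x ∈ peirceHalf ω e :=
  mem_peirceHalf.mpr ⟨peirceProj_mem_ker hωmul hx, he.proj_proj x hx⟩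

theorem proj_sub_proj (he : IsPeirceIdempotent ω e) {x : A} (hx : x ∈ LinearMap.ker ω) :
    peirceProj K e (x - peirceProj K e x) = 0 := by
  rw [map_sub, he.proj_proj x hx, sub_self]

theorem mul_mem_peirceHalf (he : IsPeirceIdempotent ω e)
    (hωmul : ∀ x y : A, ω (x * y) = ω x * ω y) {q m : A}
    (hq : q ∈ LinearMap.ker ω) (hPq : peirceProj K e q = 0) (hm : m ∈ LinearMap.ker ω) :
    q * m ∈ peirceHalf ω e := by
  refine mem_peirceHalf.mpr ⟨by simp [hωmul, LinearMap.mem_ker.mp hq], ?_⟩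
  simpa [hPq] using he.proj_mul_proj_add_proj_mul q hq m hm

theorem mul_mul_eq_neg (he : IsPeirceIdempotent ω e) {u q m : A} (hu : u ∈ peirceHalf ω e)
    (hq : q ∈ LinearMap.ker ω) (hPq : peirceProj K e q = 0) (hm : m ∈ LinearMap.ker ω) :
    u * (q * m) = -(peirceProj K e m * (u * q)) := by
  have h := he.proj_mul_mul_add_add u (mem_peirceHalf.mp hu).1 q hq m hm
  rw [(mem_peirceHalf.mp hu).2, hPq, zero_mul, add_zero] at h
  exact eq_neg_of_add_eq_zero_left h

theorem mul_mem_peirceHalfAnn_of_proj_eq_zero (he : IsPeirceIdempotent ω e)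
    (hωmul : ∀ x y : A, ω (x * y) = ω x * ω y) {q m : A}
    (hq : q ∈ LinearMap.ker ω) (hPq : peirceProj K e q = 0)
    (hm : m ∈ LinearMap.ker ω) (hPm : peirceProj K e m = 0) :
    q * m ∈ peirceHalfAnn ω e := by
  refine mem_peirceHalfAnn.mpr ⟨he.mul_mem_peirceHalf hωmul hq hPq hm, fun u hu => ?_⟩
  rw [he.mul_mul_eq_neg hu hq hPq hm, hPm, zero_mul, neg_zero]

theorem mul_mem_peirceHalfAnn (he : IsPeirceIdempotent ω e)
    (hωmul : ∀ x y : A, ω (x * y) = ω x * ω y) {n s : A}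
    (hn : n ∈ LinearMap.ker ω) (hs : s ∈ peirceHalfAnn ω e) :
    n * s ∈ peirceHalfAnn ω e := by
  obtain ⟨hsU, hsAnn⟩ := mem_peirceHalfAnn.mp hs
  have hq : n - peirceProj K e n ∈ LinearMap.ker ω := sub_mem hn (peirceProj_mem_ker hωmul hn)
  have hPq := he.proj_sub_proj hn
  have hns : n * s = (n - peirceProj K e n) * s := by
    rw [sub_mul, hsAnn _ (he.proj_mem_peirceHalf hωmul hn), sub_zero]
  rw [hns]
  refine mem_peirceHalfAnn.mpr ⟨he.mul_mem_peirceHalf hωmul hq hPq hsU.1, fun u hu => ?_⟩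
  have huq := mul_comm (n - peirceProj K e n) u ▸ he.mul_mem_peirceHalf hωmul hq hPq hu.1
  rw [he.mul_mul_eq_neg hu hq hPq hsU.1, (mem_peirceHalf.mp hsU).2, mul_comm, hsAnn _ huq,
    neg_zero]

theorem mul_proj_eq (he : IsPeirceIdempotent ω e) {n z : A} (hn : n ∈ LinearMap.ker ω)
    (hz : z ∈ LinearMap.ker ω) :
    n * peirceProj K e z = n * z - peirceProj K e (n * z) + (n - peirceProj K e n) * z
      - (n - peirceProj K e n) * (z - peirceProj K e z) := by
  simp only [sub_mul, mul_sub]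
  linear_combination (norm := module) he.proj_mul_proj_add_proj_mul n hn z hz

end IsPeirceIdempotent

theorem inf_peirceHalf_le_core (I : Submodule K A) : I ⊓ peirceHalf ω e ≤ core e I :=
  fun x ⟨hxI, _, hPx⟩ => ⟨hxI, show peirceProj K e x ∈ I from hPx ▸ hxI⟩

theorem IsPeirceIdempotent.hull_le_sup_peirceHalf (he : IsPeirceIdempotent ω e)
    (hωmul : ∀ x y : A, ω (x * y) = ω x * ω y) {I : Submodule K A} (hIN : I ≤ LinearMap.ker ω) :
    hull ω e I ≤ I ⊔ peirceHalf ω e := by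
  refine sup_le (sup_le le_sup_left ?_) (inf_le_left.trans le_sup_right)
  exact Submodule.map_le_iff_le_comap.mpr fun x hx =>
    Submodule.mem_sup_right (he.proj_mem_peirceHalf hωmul (hIN hx))

variable [IsScalarTower K A A]

theorem exists_mul_self_eq_self (hωmul : ∀ x y : A, ω (x * y) = ω x * ω y)
    (hω0 : ω ≠ 0) (hbern : ∀ x : A, (x * x) * (x * x) = ω x ^ 2 • (x * x)) :
    ∃ e : A, e * e = e ∧ ω e = 1 := by
  obtain ⟨x, hx⟩ : ∃ x, ω x ≠ 0 := by
    by_contra! h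
    exact hω0 (LinearMap.ext h)
  refine ⟨(ω x ^ 2)⁻¹ • (x * x), ?_, ?_⟩
  · rw [smul_mul_smul_comm, hbern, smul_smul]
    congr 1
    field_simp
  · rw [map_smul, hωmul, smul_eq_mul, ← sq, inv_mul_cancel₀ (pow_ne_zero 2 hx)]

theorem sq_sq_sub_sq_of_mul_self_eq_self (hee : e * e = e) (n : A) (t : K) :
    ((e + t • n) * (e + t • n)) * ((e + t • n) * (e + t • n)) - (e + t • n) * (e + t • n) =
      t • (peirceProj K e (peirceProj K e n) - peirceProj K e n)
      + t ^ 2 • (peirceProj K e (n * n) + peirceProj K e n * peirceProj K e n - n * n)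
      + t ^ 3 • ((2 : K) • (peirceProj K e n * (n * n))) + t ^ 4 • ((n * n) * (n * n)) := by
  have hne : n * e = e * n := mul_comm n e
  have hsq : (e + t • n) * (e + t • n) = e + (2 * t) • (e * n) + t ^ 2 • (n * n) := by
    simp only [mul_add, add_mul, smul_mul_assoc, mul_smul_comm, hee, hne]
    module
  have h1 : (e * n) * e = e * (e * n) := mul_comm _ _
  have h2 : (n * n) * e = e * (n * n) := mul_comm _ _
  have h3 : (n * n) * (e * n) = (e * n) * (n * n) := mul_comm _ _
  rw [hsq]
  simp only [peirceProj_apply, mul_add, add_mul, smul_mul_assoc, mul_smul_comm, smul_smul, hee,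
    h1, h2, h3]
  module

theorem isPeirceIdempotent_of_mul_self_eq_self (h2 : (2 : K) ≠ 0) (h3 : (3 : K) ≠ 0)
    (hbern : ∀ x : A, (x * x) * (x * x) = ω x ^ 2 • (x * x)) (hee : e * e = e) (hωe : ω e = 1) :
    IsPeirceIdempotent ω e := by
  have hcoeff : ∀ n ∈ LinearMap.ker ω,
      peirceProj K e (peirceProj K e n) - peirceProj K e n = 0
      ∧ peirceProj K e (n * n) + peirceProj K e n * peirceProj K e n - n * n = 0
      ∧ (2 : K) • (peirceProj K e n * (n * n)) = 0 ∧ (n * n) * (n * n) = 0 := by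
    intro n hn
    refine eq_zero_of_forall_smul_pow_add_eq_zero h2 h3 fun t => ?_
    have hω : ω (e + t • n) = 1 := by simp_all
    rw [← sq_sq_sub_sq_of_mul_self_eq_self hee, hbern, hω, one_pow, one_smul, sub_self]
  refine ⟨hωe, fun x hx => sub_eq_zero.mp (hcoeff x hx).1, fun x hx y hy => ?_,
    fun x hx y hy z hz => ?_⟩
  · exact polarize_quadratic h2 _ hx hy fun n hn => sub_eq_zero.mp (hcoeff n hn).2.1
  · exact polarize_cubic h2 _ hx hy hz fun n hn =>
      (smul_eq_zero_iff_right h2).mp (hcoeff n hn).2.2.1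

theorem mul_mem_of_peirceProj_mem (h2 : (2 : K) ≠ 0) (hωe : ω e = 1) {J : Submodule K A}
    (hP : ∀ x ∈ J, peirceProj K e x ∈ J) (hN : ∀ n ∈ LinearMap.ker ω, ∀ x ∈ J, n * x ∈ J)
    (a : A) {x : A} (hx : x ∈ J) : a * x ∈ J := by
  have hdecomp : a * x = (ω a / 2) • peirceProj K e x + (a - ω a • e) * x := by
    rw [peirceProj_apply, smul_smul, div_mul_cancel₀ _ h2, sub_mul, smul_mul_assoc]
    abel
  rw [hdecomp]
  refine J.add_mem (J.smul_mem _ (hP x hx)) (hN _ ?_ x hx)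
  simp [hωe]

namespace IsPeirceIdempotent

variable {I : Submodule K A}

theorem mul_mem_core (he : IsPeirceIdempotent ω e) (h2 : (2 : K) ≠ 0)
    (hωmul : ∀ x y : A, ω (x * y) = ω x * ω y) (hIN : I ≤ LinearMap.ker ω)
    (hI : ∀ n ∈ LinearMap.ker ω, ∀ x ∈ I, n * x ∈ I) (a : A) {x : A} (hx : x ∈ core e I) :
    a * x ∈ core e I := by
  refine mul_mem_of_peirceProj_mem h2 he.weight_eq_one (fun y hy => ?_) (fun n hn y hy => ?_) a hx
  · obtain ⟨hyI, hPy⟩ := hy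
    refine ⟨hPy, ?_⟩
    show peirceProj K e (peirceProj K e y) ∈ I
    rwa [he.proj_proj y (hIN hyI)]
  · obtain ⟨hyI, hPy⟩ := hy
    refine ⟨hI n hn y hyI, ?_⟩
    show peirceProj K e (n * y) ∈ I
    rw [eq_sub_of_add_eq' (he.proj_mul_proj_add_proj_mul n hn y (hIN hyI))]
    exact sub_mem (hI n hn y hyI) (hI _ (peirceProj_mem_ker hωmul hn) _ hPy)

theorem mul_mem_hull (he : IsPeirceIdempotent ω e) (h2 : (2 : K) ≠ 0)
    (hωmul : ∀ x y : A, ω (x * y) = ω x * ω y) (hIN : I ≤ LinearMap.ker ω)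
    (hI : ∀ n ∈ LinearMap.ker ω, ∀ x ∈ I, n * x ∈ I) (a : A) {x : A} (hx : x ∈ hull ω e I) :
    a * x ∈ hull ω e I := by
  have mem_of_mem : ∀ {y}, y ∈ I → y ∈ hull ω e I := fun hy =>
    Submodule.mem_sup_left (Submodule.mem_sup_left hy)
  have proj_mem : ∀ {y}, y ∈ I → peirceProj K e y ∈ hull ω e I := fun hy =>
    Submodule.mem_sup_left (Submodule.mem_sup_right (Submodule.mem_map_of_mem hy))
  have mem_of_mem_ann : ∀ {s}, s ∈ peirceHalfAnn ω e → s ∈ hull ω e I :=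
    Submodule.mem_sup_right
  refine mul_mem_of_peirceProj_mem h2 he.weight_eq_one (fun v hv => ?_) (fun n hn v hv => ?_) a hx
  all_goals
    obtain ⟨t, ht, s, hs, rfl⟩ := Submodule.mem_sup.mp hv
    obtain ⟨y, hy, w, hw, rfl⟩ := Submodule.mem_sup.mp ht
    obtain ⟨z, hz, rfl⟩ := Submodule.mem_map.mp hw
  · rw [map_add, map_add, he.proj_proj z (hIN hz),
      (mem_peirceHalf.mp (mem_peirceHalfAnn.mp hs).1).2]
    exact add_mem (add_mem (proj_mem hy) (proj_mem hz)) (mem_of_mem_ann hs)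
  · have hq : n - peirceProj K e n ∈ LinearMap.ker ω := sub_mem hn (peirceProj_mem_ker hωmul hn)
    have hnzV : (n - peirceProj K e n) * (z - peirceProj K e z) ∈ peirceHalfAnn ω e :=
      he.mul_mem_peirceHalfAnn_of_proj_eq_zero hωmul hq (he.proj_sub_proj hn)
        (sub_mem (hIN hz) (peirceProj_mem_ker hωmul (hIN hz))) (he.proj_sub_proj (hIN hz))
    rw [mul_add, mul_add, he.mul_proj_eq hn (hIN hz)]
    refine add_mem (add_mem (mem_of_mem (hI n hn y hy)) (sub_mem (add_mem ?_ ?_)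
      (mem_of_mem_ann hnzV))) (mem_of_mem_ann (he.mul_mem_peirceHalfAnn hωmul hn hs))
    · exact sub_mem (mem_of_mem (hI n hn z hz)) (proj_mem (hI n hn z hz))
    · exact mem_of_mem (hI _ hq z hz)

theorem ker_stabilizes_of_stabilizes (he : IsPeirceIdempotent ω e) (h2 : (2 : K) ≠ 0)
    (hωmul : ∀ x y : A, ω (x * y) = ω x * ω y)
    (hA : ∀ f : ℕ → Submodule K A, (∀ k, ∀ a : A, ∀ x ∈ f k, a * x ∈ f k) → Antitone f →
      ∃ n, ∀ m, n ≤ m → f m = f n)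
    {f : ℕ → Submodule K A} (hfN : ∀ k, f k ≤ LinearMap.ker ω)
    (hfI : ∀ k, ∀ a ∈ LinearMap.ker ω, ∀ x ∈ f k, a * x ∈ f k) (hf : Antitone f) :
    ∃ n, ∀ m, n ≤ m → f m = f n := by
  have hcore := hA (fun k => core e (f k)) (fun k => he.mul_mem_core h2 hωmul (hfN k) (hfI k))
    fun _ _ hij => inf_le_inf (hf hij) (Submodule.comap_mono (hf hij))
  have hhull := hA (fun k => hull ω e (f k)) (fun k => he.mul_mem_hull h2 hωmul (hfN k) (hfI k))
    fun _ _ hij => sup_le_sup_right (sup_le_sup (hf hij) (Submodule.map_mono (hf hij))) _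
  exact eventuallyConst_atTop.mp <| hf.eventuallyConst_of_inf_le_of_le_sup
    (eventuallyConst_atTop.mpr hcore) (eventuallyConst_atTop.mpr hhull)
    (fun k => inf_peirceHalf_le_core (f k)) (fun _ => inf_le_left)
    (fun _ => le_sup_left.trans le_sup_left) (fun k => he.hull_le_sup_peirceHalf hωmul (hfN k))

end IsPeirceIdempotent

end BernsteinAlgebra

/-- A Bernstein algebra `A` over a field `K` of characteristic `≠ 2, 3` is
Artinian (satisfies the d.c.c. on ideals of `A`) if and only if its barideal `N = ker ω` is
Artinian (satisfies the d.c.c. on ideals of `N`, i.e. on subspaces `I ⊆ N` with `NI ⊆ I`). -/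
theorem bernstein_noetherian_iff_barideal_noetherian {K A : Type*} [Field K]
    [NonUnitalNonAssocCommRing A] [Module K A] [SMulCommClass K A A] [IsScalarTower K A A]
    (h2 : (2 : K) ≠ 0) (h3 : (3 : K) ≠ 0)
    (ω : A →ₗ[K] K) (hωmul : ∀ x y : A, ω (x * y) = ω x * ω y) (hω0 : ω ≠ 0)
    (hbern : ∀ x : A, (x * x) * (x * x) = ω x ^ 2 • (x * x)) :
    -- `A` is Artinian: every descending chain of ideals of `A` stabilizes
    (∀ f : ℕ → Submodule K A, (∀ k, ∀ a : A, ∀ x ∈ f k, a * x ∈ f k) → Antitone f →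
      ∃ n, ∀ m, n ≤ m → f m = f n) ↔
    -- `N = ker ω` is Artinian: every descending chain of ideals of `N` stabilizes
    (∀ f : ℕ → Submodule K A, (∀ k, f k ≤ LinearMap.ker ω) →
      (∀ k, ∀ a ∈ LinearMap.ker ω, ∀ x ∈ f k, a * x ∈ f k) → Antitone f →
      ∃ n, ∀ m, n ≤ m → f m = f n) := by
  constructor
  · intro hA f hfN hfI hf
    obtain ⟨e, hee, hωe⟩ := BernsteinAlgebra.exists_mul_self_eq_self hωmul hω0 hbern
    have he := BernsteinAlgebra.isPeirceIdempotent_of_mul_self_eq_self h2 h3 hbern hee hωe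
    exact he.ker_stabilizes_of_stabilizes h2 hωmul hA hfN hfI hf
  · exact fun hN f hfI hf => stabilizes_of_ker_stabilizes hωmul hN hfI hf
end

section
/- Let K be a field of characteristic ≠ 2, 3 and let N be the commutative K-algebra with basis {e_n : n ≥ 1} whose only nonzero products of basis elements are e_n·e_n = e_{n−1} for n ≥ 2. Then every nonzero proper subalgebra of N equals the span of {e_1, …, e_n} for some n ≥ 1, and each such subalgebra is an ideal of N. -/
/-!
In the basis `bₖ = e_{k+1}` the product is `bᵢ bⱼ = [i = j ≥ 1] b_{i-1}`, so the `k`-th coordinate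
of `x y` is `x_{k+1} y_{k+1}`. Hence squaring lowers the degree of an element by one and squares
its leading coefficient: a subalgebra containing an element of degree `m` contains its square of
degree `m - 1`, by induction all of `b₀, …, b_{m-1}`, and then also `b_m`. The indices `j` with
`bⱼ ∈ S` thus form an initial segment of `ℕ` whose span is `S`; the product formula also shows
that every `span {b₀, …, b_{n-1}}` is an ideal.
-/

open Module Submodule

theorem Module.Basis.mem_of_mem_span_image_Iic {K M ι : Type*} [Field K] [AddCommGroup M]
    [Module K M] [LinearOrder ι] {b : Basis ι K M} {S : Submodule K M} {x : M} {m : ι}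
    (hxS : x ∈ S) (hxm : x ∈ span K (b '' Set.Iic m)) (hm : b.repr x m ≠ 0)
    (hlow : ∀ j < m, b j ∈ S) : b m ∈ S := by
  have hrest : x - b.repr x m • b m ∈ span K (b '' Set.Iio m) := by
    refine b.mem_span_image.mpr fun j hj => ?_
    rw [Finset.mem_coe, Finsupp.mem_support_iff] at hj
    obtain rfl | hjm := eq_or_ne j m
    · simp at hj
    have hxj : b.repr x j ≠ 0 := by simpa [Finsupp.single_apply, Ne.symm hjm] using hj
    exact lt_of_le_of_ne (b.mem_span_image.mp hxm (by simpa using hxj)) hjm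
  have hspan_le : span K (b '' Set.Iio m) ≤ S := by
    rw [span_le]
    rintro _ ⟨j, hj, rfl⟩
    exact hlow j hj
  have hlead : b.repr x m • b m ∈ S := by simpa using S.sub_mem hxS (hspan_le hrest)
  simpa [smul_smul, inv_mul_cancel₀ hm] using S.smul_mem (b.repr x m)⁻¹ hlead

namespace Module.Basis

variable {K N : Type*} [Field K] [NonUnitalNonAssocRing N] [Module K N]

def IsSquareShift (b : Basis ℕ K N) : Prop :=
  ∀ k l, b k * b l = if k = l ∧ 1 ≤ k then b (k - 1) else 0

namespace IsSquareShift

variable [SMulCommClass K N N] [IsScalarTower K N N] {b : Basis ℕ K N}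

theorem repr_mul (hb : b.IsSquareShift) (x y : N) (k : ℕ) :
    b.repr (x * y) k = b.repr x (k + 1) * b.repr y (k + 1) := by
  have key : (LinearMap.mul K N).compr₂ (b.coord k) =
      (LinearMap.mul K K).compl₁₂ (b.coord (k + 1)) (b.coord (k + 1)) := by
    refine LinearMap.ext_basis b b fun i j => ?_
    simp only [LinearMap.compr₂_apply, LinearMap.compl₁₂_apply, LinearMap.mul_apply',
      coord_apply, repr_self, hb i j, Finsupp.single_apply]
    split_ifs <;> simp [Finsupp.single_apply] <;> omega
  exact LinearMap.congr_fun₂ key x y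

theorem mul_mem_span_image_Iio (hb : b.IsSquareShift) {n : ℕ} (a : N) {x : N}
    (hx : x ∈ span K (b '' Set.Iio n)) : a * x ∈ span K (b '' Set.Iio n) := by
  rw [b.mem_span_image] at hx ⊢
  intro j hj
  rw [Finset.mem_coe, Finsupp.mem_support_iff, hb.repr_mul] at hj
  have hxj : j + 1 < n := hx (Finsupp.mem_support_iff.mpr (right_ne_zero_of_mul hj))
  exact Nat.lt_of_succ_lt hxj

theorem basis_mem_of_mem_span_image_Iic (hb : b.IsSquareShift) (S : NonUnitalSubalgebra K N)
    {m : ℕ} {x : N} (hxS : x ∈ S) (hxm : x ∈ span K (b '' Set.Iic m)) (hm : b.repr x m ≠ 0) :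
    ∀ j ≤ m, b j ∈ S := by
  induction m generalizing x with
  | zero =>
    intro j hj
    obtain rfl := Nat.le_zero.mp hj
    exact b.mem_of_mem_span_image_Iic (S := S.toSubmodule) hxS hxm hm nofun
  | succ m ih =>
    have hsq_mem : x * x ∈ span K (b '' Set.Iic m) := by
      rw [b.mem_span_image] at hxm ⊢
      intro j hj
      rw [Finset.mem_coe, Finsupp.mem_support_iff, hb.repr_mul] at hj
      exact Nat.succ_le_succ_iff.mp (hxm (Finsupp.mem_support_iff.mpr (left_ne_zero_of_mul hj)))
    have hsq_lead : b.repr (x * x) m ≠ 0 := by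
      rw [hb.repr_mul]
      exact mul_ne_zero hm hm
    have hlow := ih (S.mul_mem hxS hxS) hsq_mem hsq_lead
    intro j hj
    obtain hj | rfl := Nat.lt_or_eq_of_le hj
    · exact hlow j (Nat.lt_succ_iff.mp hj)
    · exact b.mem_of_mem_span_image_Iic (S := S.toSubmodule) hxS hxm hm
        fun j hj => hlow j (Nat.lt_succ_iff.mp hj)

theorem basis_mem_of_le (hb : b.IsSquareShift) (S : NonUnitalSubalgebra K N) {i j : ℕ}
    (hj : b j ∈ S) (hij : i ≤ j) : b i ∈ S :=
  hb.basis_mem_of_mem_span_image_Iic S hj (subset_span ⟨j, Set.mem_Iic.mpr le_rfl, rfl⟩)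
    (by simp) i hij

theorem basis_mem_of_repr_ne_zero (hb : b.IsSquareShift) (S : NonUnitalSubalgebra K N) {x : N}
    (hxS : x ∈ S) {j : ℕ} (hj : b.repr x j ≠ 0) : b j ∈ S := by
  have hsupp : j ∈ (b.repr x).support := Finsupp.mem_support_iff.mpr hj
  have hdeg := Finset.max'_mem _ ⟨j, hsupp⟩
  exact hb.basis_mem_of_mem_span_image_Iic S hxS
    (b.mem_span_image.mpr fun i hi => Set.mem_Iic.mpr (Finset.le_max' _ i hi))
    (Finsupp.mem_support_iff.mp hdeg) j (Finset.le_max' _ j hsupp)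

theorem toSubmodule_eq_span_image_setOf_basis_mem (hb : b.IsSquareShift)
    (S : NonUnitalSubalgebra K N) : S.toSubmodule = span K (b '' {j | b j ∈ S}) := by
  refine le_antisymm (fun x hxS => ?_) (span_le.mpr ?_)
  · exact b.mem_span_image.mpr fun j hj =>
      hb.basis_mem_of_repr_ne_zero S hxS (Finsupp.mem_support_iff.mp hj)
  · rintro _ ⟨j, hj, rfl⟩
    exact hj

theorem exists_toSubmodule_eq_span_image_Iio (hb : b.IsSquareShift)
    (S : NonUnitalSubalgebra K N) (hbot : S.toSubmodule ≠ ⊥) (htop : S.toSubmodule ≠ ⊤) :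
    ∃ n, 1 ≤ n ∧ S.toSubmodule = span K (b '' Set.Iio n) := by
  classical
  have hout : ∃ n, b n ∉ S := by
    by_contra! h
    exact htop (eq_top_iff.mpr (b.span_eq ▸ span_le.mpr (Set.range_subset_iff.mpr h)))
  have hS : S.toSubmodule = span K (b '' Set.Iio (Nat.find hout)) := by
    rw [hb.toSubmodule_eq_span_image_setOf_basis_mem S]
    congr
    ext j
    refine ⟨fun hj => ?_, fun hj => not_not.mp (Nat.find_min hout hj)⟩
    by_contra! hle
    exact Nat.find_spec hout (hb.basis_mem_of_le S hj hle)
  refine ⟨Nat.find hout, Nat.one_le_iff_ne_zero.mpr fun h0 => hbot ?_, hS⟩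
  simp [hS, h0]

end IsSquareShift

end Module.Basis

theorem zhevlakov_example_subalgebras_general {K N : Type*} [Field K]
    [NonUnitalNonAssocCommRing N] [Module K N] [SMulCommClass K N N] [IsScalarTower K N N]
    (b : Module.Basis ℕ K N) (e : ℕ → N) (he : ∀ i, e i = b (i - 1))
    -- the only nonzero products of basis elements are `eₙ · eₙ = e_{n-1}` for `n ≥ 2`
    (hmul : ∀ i j, 1 ≤ i → 1 ≤ j → e i * e j = if i = j ∧ 2 ≤ i then e (i - 1) else 0) :
    -- every nonzero proper subalgebra of `N` is `span {e₁, …, eₙ}` for some `n ≥ 1`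
    (∀ S : NonUnitalSubalgebra K N, S.toSubmodule ≠ ⊥ → S.toSubmodule ≠ ⊤ →
      ∃ n, 1 ≤ n ∧ S.toSubmodule = Submodule.span K (e '' Set.Icc 1 n)) ∧
    -- each such subspace `span {e₁, …, eₙ}` is an ideal of `N`
    (∀ n, 1 ≤ n → ∀ a : N, ∀ x ∈ Submodule.span K (e '' Set.Icc 1 n),
      a * x ∈ Submodule.span K (e '' Set.Icc 1 n)) := by
  have hb : b.IsSquareShift := fun k l => by
    simpa [he, Nat.succ_le_succ_iff] using hmul (k + 1) (l + 1) k.succ_pos l.succ_pos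
  have himage : ∀ n, e '' Set.Icc 1 n = b '' Set.Iio n := fun n => by
    ext y
    constructor
    · rintro ⟨i, ⟨hi1, hin⟩, rfl⟩
      exact ⟨i - 1, Set.mem_Iio.mpr (by omega), (he i).symm⟩
    · rintro ⟨j, hj, rfl⟩
      exact ⟨j + 1, ⟨j.succ_pos, Set.mem_Iio.mp hj⟩, he (j + 1)⟩
  simp only [himage]
  exact ⟨fun S => hb.exists_toSubmodule_eq_span_image_Iio S,
    fun _ _ a _ => hb.mul_mem_span_image_Iio a⟩

/-- Let `K` be a field of characteristic `≠ 2, 3` and let `N` be the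
commutative `K`-algebra with basis `{eₙ : n ≥ 1}` whose only nonzero products of basis elements
are `eₙ · eₙ = e_{n-1}` for `n ≥ 2`.  Then every nonzero proper subalgebra of `N` equals the
span of `{e₁, …, eₙ}` for some `n ≥ 1`, and each such subalgebra is an ideal of `N`.

(The basis `{eₙ : n ≥ 1}` is encoded by a basis `b` of `N` indexed by `ℕ` via
`e i = b (i - 1)` for `i ≥ 1`.) -/
theorem zhevlakov_example_subalgebras {K N : Type*} [Field K]
    [NonUnitalNonAssocCommRing N] [Module K N] [SMulCommClass K N N] [IsScalarTower K N N]
    (h2 : (2 : K) ≠ 0) (h3 : (3 : K) ≠ 0)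
    (b : Module.Basis ℕ K N) (e : ℕ → N) (he : ∀ i, e i = b (i - 1))
    -- the only nonzero products of basis elements are `eₙ · eₙ = e_{n-1}` for `n ≥ 2`
    (hmul : ∀ i j, 1 ≤ i → 1 ≤ j → e i * e j = if i = j ∧ 2 ≤ i then e (i - 1) else 0) :
    -- every nonzero proper subalgebra of `N` is `span {e₁, …, eₙ}` for some `n ≥ 1`
    (∀ S : NonUnitalSubalgebra K N, S.toSubmodule ≠ ⊥ → S.toSubmodule ≠ ⊤ →
      ∃ n, 1 ≤ n ∧ S.toSubmodule = Submodule.span K (e '' Set.Icc 1 n)) ∧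
    -- each such subspace `span {e₁, …, eₙ}` is an ideal of `N`
    (∀ n, 1 ≤ n → ∀ a : N, ∀ x ∈ Submodule.span K (e '' Set.Icc 1 n),
      a * x ∈ Submodule.span K (e '' Set.Icc 1 n)) :=
  zhevlakov_example_subalgebras_general b e he hmul
end
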